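/- arXiv:2605.28052 — 9 statements merged into one kernel-verified Lean document; each statement's English description precedes it below -/
import Mathlib

section
/- For every configuration v : ZMod L → {0,1} and every bit field b : ZMod L → {0,1}, writing u = U(v,b), one has ∑_{j ∈ ZMod L} u_{j−1}·u_j·(1−u_{j+1}) = ∑_{j ∈ ZMod L} v_{j−1}·v_j·(1−v_{j+1}); that is, the number #110 of occurrences of the local pattern 110 is conserved by every realization of the stochastic 5-neighbor update. -/
/-- The flux function `q(w,x,y,z;b)`. -/
def flux (w x y z b : ℤ) : ℤ :=
  if w = 1 ∧ x = 1 ∧ y = 1 ∧ z = 0 then b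
  else if (w = 0 ∨ w = 1) ∧ x = 0 ∧ y = 1 ∧ z = 0 then 1
  else 0

/-- The stochastic 5-neighbor update `U(v,b)`. -/
def upd (L : ℕ) (v b : ZMod L → ℤ) : ZMod L → ℤ := fun j =>
  v j + flux (v (j - 3)) (v (j - 2)) (v (j - 1)) (v j) (b j)
      - flux (v (j - 2)) (v (j - 1)) (v j) (v (j + 1)) (b (j + 1))

/-- A map `ZMod L → ℤ` is a configuration (resp. bit field) if all its values are 0 or 1. -/
def IsBin (L : ℕ) (x : ZMod L → ℤ) : Prop := ∀ j, x j = 0 ∨ x j = 1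

/-- The number of occurrences of the pattern `w` in the configuration `x`. -/
def patCount (L : ℕ) (x : ZMod L → ℤ) (w : List ℤ) : ℕ :=
  ((Finset.range L).filter fun j =>
    ∀ i < w.length, x ((j + i : ℕ) : ZMod L) = w.getD i 0).card

/-- The local identity: the change of the 110 indicator at site `j` equals a discrete
divergence of the current `J(j) = v₋₂v₋₁v₀(1-v₁)b₁`. -/
lemma key110 (v4 v3 v2 v1 v0 w1 w2 b1 b0 c1 c2 : ℤ)
    (h4 : v4 = 0 ∨ v4 = 1) (h3 : v3 = 0 ∨ v3 = 1) (h2 : v2 = 0 ∨ v2 = 1)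
    (h1 : v1 = 0 ∨ v1 = 1) (h0 : v0 = 0 ∨ v0 = 1) (hw1 : w1 = 0 ∨ w1 = 1)
    (hw2 : w2 = 0 ∨ w2 = 1) (hb1 : b1 = 0 ∨ b1 = 1) (hb0 : b0 = 0 ∨ b0 = 1)
    (hc1 : c1 = 0 ∨ c1 = 1) (hc2 : c2 = 0 ∨ c2 = 1) :
    (v1 + flux v4 v3 v2 v1 b1 - flux v3 v2 v1 v0 b0) *
      (v0 + flux v3 v2 v1 v0 b0 - flux v2 v1 v0 w1 c1) *
      (1 - (w1 + flux v2 v1 v0 w1 c1 - flux v1 v0 w1 w2 c2)) -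
      v1 * v0 * (1 - w1)
    = v1 * v0 * w1 * (1 - w2) * c2 - v2 * v1 * v0 * (1 - w1) * c1 := by
  rcases h4 with rfl | rfl <;> rcases h3 with rfl | rfl <;> rcases h2 with rfl | rfl <;>
    rcases h1 with rfl | rfl <;> rcases h0 with rfl | rfl <;> rcases hw1 with rfl | rfl <;>
    rcases hw2 with rfl | rfl <;> rcases hb1 with rfl | rfl <;> rcases hb0 with rfl | rfl <;>
    rcases hc1 with rfl | rfl <;> rcases hc2 with rfl | rfl <;> decide

lemma sum_range_eq_sum_zmod (L : ℕ) [NeZero L] (f : ZMod L → ℤ) :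
    ∑ j ∈ Finset.range L, f ((j : ℕ) : ZMod L) = ∑ j : ZMod L, f j := by
  refine Finset.sum_nbij' (fun j => ((j : ℕ) : ZMod L)) (fun j => j.val) ?_ ?_ ?_ ?_ ?_
  · intro a _; exact Finset.mem_univ _
  · intro a _; exact Finset.mem_range.mpr (ZMod.val_lt a)
  · intro a ha; exact ZMod.val_natCast_of_lt (Finset.mem_range.mp ha)
  · intro a _; exact ZMod.natCast_rightInverse a
  · intro a _; rfl

/-- the number #110 of occurrences of the local pattern 110 is conserved
by every realization of the stochastic 5-neighbor update. -/
theorem pattern110_conserved (L : ℕ) (hL : 6 ≤ L)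
    (v b : ZMod L → ℤ) (hv : IsBin L v) (hb : IsBin L b) :
    (∑ j ∈ Finset.range L,
        upd L v b (((j : ℕ) : ZMod L) - 1) * upd L v b ((j : ℕ) : ZMod L) *
          (1 - upd L v b (((j : ℕ) : ZMod L) + 1)))
      = ∑ j ∈ Finset.range L,
          v (((j : ℕ) : ZMod L) - 1) * v ((j : ℕ) : ZMod L) *
            (1 - v (((j : ℕ) : ZMod L) + 1)) := by
  have : NeZero L := ⟨by omega⟩
  have hu := sum_range_eq_sum_zmod L
    (fun j => upd L v b (j - 1) * upd L v b j * (1 - upd L v b (j + 1)))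
  have hv2 := sum_range_eq_sum_zmod L
    (fun j => v (j - 1) * v j * (1 - v (j + 1)))
  refine hu.trans (Eq.trans ?_ hv2.symm)
  set J : ZMod L → ℤ := fun j => v (j - 1) * v j * v (j + 1) * (1 - v (j + 2)) * b (j + 2)
    with hJ
  rw [← sub_eq_zero, ← Finset.sum_sub_distrib]
  have hpt : ∀ j : ZMod L,
      upd L v b (j - 1) * upd L v b j * (1 - upd L v b (j + 1)) -
        v (j - 1) * v j * (1 - v (j + 1)) = J j - J (j - 1) := by
    intro j
    have e1 : j - 1 - 3 = j - 4 := by ring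
    have e2 : j - 1 - 2 = j - 3 := by ring
    have e3 : j - 1 - 1 = j - 2 := by ring
    have e4 : j - 1 + 1 = j := by ring
    have e5 : j + 1 - 3 = j - 2 := by ring
    have e6 : j + 1 - 2 = j - 1 := by ring
    have e7 : j + 1 - 1 = j := by ring
    have e8 : j - 1 + 2 = j + 1 := by ring
    have e9 : j + 2 - 1 = j + 1 := by ring
    have e10 : j + 1 + 1 = j + 2 := by ring
    simp only [upd, hJ, e1, e2, e3, e4, e5, e6, e7, e8, e9, e10]
    have := key110 (v (j - 4)) (v (j - 3)) (v (j - 2)) (v (j - 1)) (v j) (v (j + 1))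
      (v (j + 2)) (b (j - 1)) (b j) (b (j + 1)) (b (j + 2))
      (hv _) (hv _) (hv _) (hv _) (hv _) (hv _) (hv _) (hb _) (hb _) (hb _) (hb _)
    linarith [this]
  calc ∑ j : ZMod L, (upd L v b (j - 1) * upd L v b j * (1 - upd L v b (j + 1)) -
          v (j - 1) * v j * (1 - v (j + 1)))
      = ∑ j : ZMod L, (J j - J (j - 1)) := Finset.sum_congr rfl fun j _ => hpt j
    _ = 0 := by
        rw [Finset.sum_sub_distrib, sub_eq_zero]
        exact (Equiv.sum_comp (Equiv.subRight (1 : ZMod L)) J).symm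
end

section
/- For every configuration x : ZMod L → {0,1}, the set B(x) := { x' : ∃ bit field b, U(x',b) = x } of one-step predecessors of x is nonempty. -/
/-- `x'` is a one-step predecessor of `x`: `x'` belongs to `B(x)`. -/
def inB (L : ℕ) (x' x : ZMod L → ℤ) : Prop :=
  IsBin L x' ∧ ∃ b : ZMod L → ℤ, IsBin L b ∧ upd L x' b = x

/-- Local rule for the predecessor: move each isolated 1 one step to the left. -/
def Fv (p q r s : ℤ) : ℤ :=
  if q = 1 ∧ p = 0 ∧ r = 0 then 0
  else if q = 0 ∧ r = 1 ∧ s = 0 then 1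
  else q

/-- Local rule for the bit field: fire exactly at isolated 1s of the target. -/
def Gb (p q r : ℤ) : ℤ := if q = 1 ∧ p = 0 ∧ r = 0 then 1 else 0

lemma key (a b c d e f g h : ℤ)
    (ha : a = 0 ∨ a = 1) (hb : b = 0 ∨ b = 1) (hc : c = 0 ∨ c = 1)
    (hd : d = 0 ∨ d = 1) (he : e = 0 ∨ e = 1) (hf : f = 0 ∨ f = 1)
    (hg : g = 0 ∨ g = 1) (hh : h = 0 ∨ h = 1) :
    Fv d e f g
      + flux (Fv a b c d) (Fv b c d e) (Fv c d e f) (Fv d e f g) (Gb d e f)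
      - flux (Fv b c d e) (Fv c d e f) (Fv d e f g) (Fv e f g h) (Gb e f g) = e := by
  rcases ha with rfl | rfl <;> rcases hb with rfl | rfl <;>
  rcases hc with rfl | rfl <;> rcases hd with rfl | rfl <;>
  rcases he with rfl | rfl <;> rcases hf with rfl | rfl <;>
  rcases hg with rfl | rfl <;> rcases hh with rfl | rfl <;> decide

/-- the predecessor set B(x) is nonempty for every configuration x. -/
theorem B_nonempty (L : ℕ) (hL : 6 ≤ L) (x : ZMod L → ℤ) (hx : IsBin L x) :
    ∃ x' : ZMod L → ℤ, inB L x' x := by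
  refine ⟨fun j => Fv (x (j - 1)) (x j) (x (j + 1)) (x (j + 2)), ?_,
    fun j => Gb (x (j - 1)) (x j) (x (j + 1)), ?_, ?_⟩
  · intro j
    dsimp only
    unfold Fv
    split_ifs with h1 h2
    · exact Or.inl rfl
    · exact Or.inr rfl
    · exact hx j
  · intro j
    dsimp only
    unfold Gb
    split_ifs
    · exact Or.inr rfl
    · exact Or.inl rfl
  · funext j
    simp only [upd]
    have e1 : j - 3 - 1 = j - 4 := by ring
    have e2 : j - 3 + 1 = j - 2 := by ring
    have e3 : j - 3 + 2 = j - 1 := by ring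
    have e4 : j - 2 - 1 = j - 3 := by ring
    have e5 : j - 2 + 1 = j - 1 := by ring
    have e6 : j - 2 + 2 = j := by ring
    have e7 : j - 1 - 1 = j - 2 := by ring
    have e8 : j - 1 + 1 = j := by ring
    have e9 : j - 1 + 2 = j + 1 := by ring
    have e10 : j + 1 - 1 = j := by ring
    have e11 : j + 1 + 1 = j + 2 := by ring
    have e12 : j + 1 + 2 = j + 3 := by ring
    rw [e1, e2, e3, e4, e5, e6, e7, e8, e9, e10, e11, e12]
    exact key (x (j - 4)) (x (j - 3)) (x (j - 2)) (x (j - 1)) (x j) (x (j + 1))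
      (x (j + 2)) (x (j + 3)) (hx _) (hx _) (hx _) (hx _) (hx _) (hx _) (hx _) (hx _)
end

section
/- For every configuration x : ZMod L → {0,1}, one has B(x) = {x} if and only if either #1(x) ∈ {0, L}, or both #010(x) = 0 and #111(x) = 0. -/
/-! ### auxiliary flux lemmas -/

lemma flux_bin {w x y z b : ℤ} (hb : b = 0 ∨ b = 1) :
    flux w x y z b = 0 ∨ flux w x y z b = 1 := by
  unfold flux; split_ifs <;> tauto

lemma flux_ne_zero {w x y z b : ℤ} (h : flux w x y z b ≠ 0) : y = 1 ∧ z = 0 := by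
  unfold flux at h; split_ifs at h <;> tauto

lemma flux_b0_ne_zero {w x y z : ℤ} (h : flux w x y z 0 ≠ 0) :
    x = 0 ∧ y = 1 ∧ z = 0 := by
  unfold flux at h; split_ifs at h <;> tauto

lemma flux_010 {w b : ℤ} (hw : w = 0 ∨ w = 1) : flux w 0 1 0 b = 1 := by
  unfold flux; rw [if_neg (by norm_num), if_pos (by norm_num [hw])]

lemma flux_1110 {b : ℤ} : flux 1 1 1 0 b = b := by
  unfold flux; rw [if_pos (by norm_num)]

lemma flux_z_ne {w x y z b : ℤ} (h : z ≠ 0) : flux w x y z b = 0 := by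
  unfold flux; split_ifs <;> tauto

lemma flux_y_ne {w x y z b : ℤ} (h : y ≠ 1) : flux w x y z b = 0 := by
  unfold flux; split_ifs <;> tauto

lemma flux_01 {y z b : ℤ} : flux 0 1 y z b = 0 := by
  unfold flux; split_ifs <;> omega

/-! ### flux across a bond -/

/-- The flux across the bond `(j, j+1)`. -/
def fluxAt (L : ℕ) (v b : ZMod L → ℤ) (j : ZMod L) : ℤ :=
  flux (v (j - 2)) (v (j - 1)) (v j) (v (j + 1)) (b (j + 1))

lemma upd_eq (L : ℕ) (v b : ZMod L → ℤ) (j : ZMod L) :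
    upd L v b j = v j + fluxAt L v b (j - 1) - fluxAt L v b j := by
  unfold upd fluxAt
  rw [show j - 1 - 2 = j - 3 by ring, show j - 1 - 1 = j - 2 by ring,
      show j - 1 + 1 = j by ring]

lemma sum_upd (L : ℕ) [NeZero L] (v b : ZMod L → ℤ) :
    ∑ j : ZMod L, upd L v b j = ∑ j : ZMod L, v j := by
  have h : ∀ j : ZMod L, upd L v b j = v j + fluxAt L v b (j - 1) - fluxAt L v b j :=
    upd_eq L v b
  simp only [h]
  rw [Finset.sum_sub_distrib, Finset.sum_add_distrib]
  have : ∑ j : ZMod L, fluxAt L v b (j - 1) = ∑ j : ZMod L, fluxAt L v b j :=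
    Fintype.sum_equiv (Equiv.subRight (1 : ZMod L)) _ _ (fun j => rfl)
  rw [this]; ring

/-! ### pattern-count translations -/

lemma cond_one {L : ℕ} (x : ZMod L → ℤ) (j : ℕ) :
    (∀ i < ([1] : List ℤ).length, x ((j + i : ℕ) : ZMod L) = ([1] : List ℤ).getD i 0)
      ↔ x (j : ZMod L) = 1 := by
  constructor
  · intro h; simpa using h 0 (by norm_num)
  · intro h i hi
    have hi' : i < 1 := by simpa using hi
    interval_cases i
    simpa using h

lemma cond_three {L : ℕ} (x : ZMod L → ℤ) (w0 w1 w2 : ℤ) (j : ℕ) :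
    (∀ i < ([w0,w1,w2] : List ℤ).length,
        x ((j + i : ℕ) : ZMod L) = ([w0,w1,w2] : List ℤ).getD i 0)
      ↔ x (j : ZMod L) = w0 ∧ x ((j : ZMod L) + 1) = w1 ∧ x ((j : ZMod L) + 2) = w2 := by
  constructor
  · intro h
    refine ⟨by simpa using h 0 (by norm_num), ?_, ?_⟩
    · have := h 1 (by norm_num); push_cast at this; simpa using this
    · have := h 2 (by norm_num); push_cast at this; simpa using this
  · intro h i hi
    have hi' : i < 3 := by simpa using hi
    interval_cases i
    · simpa using h.1
    · push_cast; simpa using h.2.1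
    · push_cast; simpa using h.2.2

lemma patCount_one_eq_zero_iff {L : ℕ} [NeZero L] (x : ZMod L → ℤ) :
    patCount L x [1] = 0 ↔ ∀ c : ZMod L, x c ≠ 1 := by
  unfold patCount
  rw [Finset.card_eq_zero, Finset.filter_eq_empty_iff]
  constructor
  · intro h c hc
    exact h (Finset.mem_range.mpr (ZMod.val_lt c)) ((cond_one x c.val).mpr
      (by rwa [ZMod.natCast_rightInverse c]))
  · intro h j _ hj
    exact h _ ((cond_one x j).mp hj)

lemma patCount_one_eq_card_iff {L : ℕ} [NeZero L] (x : ZMod L → ℤ) :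
    patCount L x [1] = L ↔ ∀ c : ZMod L, x c = 1 := by
  unfold patCount
  constructor
  · intro h c
    have heq := Finset.eq_of_subset_of_card_le (Finset.filter_subset
      (fun j => ∀ i < ([1] : List ℤ).length, x ((j + i : ℕ) : ZMod L) = ([1] : List ℤ).getD i 0)
      (Finset.range L)) (by rw [h, Finset.card_range])
    have hmem : c.val ∈ Finset.range L := Finset.mem_range.mpr (ZMod.val_lt c)
    rw [← heq] at hmem
    have := (cond_one x c.val).mp (Finset.mem_filter.mp hmem).2
    rwa [ZMod.natCast_rightInverse c] at this
  · intro h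
    rw [Finset.filter_true_of_mem, Finset.card_range]
    intro j _
    exact (cond_one x j).mpr (h _)

lemma patCount_three_eq_zero_iff {L : ℕ} [NeZero L] (x : ZMod L → ℤ) (w0 w1 w2 : ℤ) :
    patCount L x [w0, w1, w2] = 0 ↔
      ∀ c : ZMod L, ¬(x c = w0 ∧ x (c + 1) = w1 ∧ x (c + 2) = w2) := by
  unfold patCount
  rw [Finset.card_eq_zero, Finset.filter_eq_empty_iff]
  constructor
  · intro h c hc
    refine h (Finset.mem_range.mpr (ZMod.val_lt c)) ((cond_three x w0 w1 w2 c.val).mpr ?_)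
    rwa [ZMod.natCast_rightInverse c]
  · intro h j _ hj
    exact h _ ((cond_three x w0 w1 w2 j).mp hj)

/-! ### uniqueness of the predecessor when there is no 010 and no 111 -/

lemma pred_eq_of_no010_no111 {L : ℕ} (x x' b : ZMod L → ℤ)
    (hx : IsBin L x) (hx' : IsBin L x') (hb : IsBin L b)
    (hu : upd L x' b = x)
    (h010 : ∀ c : ZMod L, ¬(x c = 0 ∧ x (c + 1) = 1 ∧ x (c + 2) = 0))
    (h111 : ∀ c : ZMod L, ¬(x c = 1 ∧ x (c + 1) = 1 ∧ x (c + 2) = 1)) :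
    x' = x := by
  have heq : ∀ j, x' j + fluxAt L x' b (j - 1) - fluxAt L x' b j = x j := fun j => by
    rw [← upd_eq]; exact congrFun hu j
  have hGbin : ∀ j : ZMod L, fluxAt L x' b j = 0 ∨ fluxAt L x' b j = 1 :=
    fun j => flux_bin (hb (j + 1))
  have hG0 : ∀ p : ZMod L, fluxAt L x' b p = 0 := by
    intro p
    by_contra hGp
    have hG1 : fluxAt L x' b p = 1 := (hGbin p).resolve_left hGp
    obtain ⟨hxp1, hxp2⟩ := flux_ne_zero hGp
    -- hxp1 : x' p = 1, hxp2 : x' (p+1) = 0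
    have hGp1 : fluxAt L x' b (p + 1) = 0 := by
      show flux (x' (p + 1 - 2)) (x' (p + 1 - 1)) (x' (p + 1)) (x' (p + 1 + 1)) (b (p + 1 + 1)) = 0
      exact flux_y_ne (by rw [hxp2]; norm_num)
    have hGm1 : fluxAt L x' b (p - 1) = 0 := by
      show flux (x' (p - 1 - 2)) (x' (p - 1 - 1)) (x' (p - 1)) (x' (p - 1 + 1)) (b (p - 1 + 1)) = 0
      exact flux_z_ne (by rw [show p - 1 + 1 = p by ring, hxp1]; norm_num)
    have hxP1 : x (p + 1) = 1 := by
      have := heq (p + 1)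
      rw [show p + 1 - 1 = p by ring, hxp2, hG1, hGp1] at this
      linarith
    have hxP : x p = 0 := by
      have := heq p
      rw [hxp1, hGm1, hG1] at this
      linarith
    have hxP2 : x (p + 2) = 1 := by
      rcases hx (p + 2) with h | h
      · exact absurd ⟨hxP, hxP1, h⟩ (h010 p)
      · exact h
    have h22 : x' (p + 2) = 1 ∧ fluxAt L x' b (p + 2) = 0 := by
      have := heq (p + 2)
      rw [show p + 2 - 1 = p + 1 by ring, hGp1, hxP2] at this
      rcases hx' (p + 2) with h | h <;> rcases hGbin (p + 2) with h' | h' <;>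
        rw [h, h'] at this <;> first | exact ⟨h, h'⟩ | norm_num at this
    have hxp3 : x' (p + 3) = 1 := by
      rcases hx' (p + 3) with h | h
      · exfalso
        have : fluxAt L x' b (p + 2) = 1 := by
          show flux (x' (p + 2 - 2)) (x' (p + 2 - 1)) (x' (p + 2)) (x' (p + 2 + 1))
            (b (p + 2 + 1)) = 1
          rw [show p + 2 - 2 = p by ring, show p + 2 - 1 = p + 1 by ring,
            show p + 2 + 1 = p + 3 by ring, hxp1, hxp2, h22.1, h]
          exact flux_010 (Or.inr rfl)
        rw [h22.2] at this; norm_num at this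
      · exact h
    have hG3 : fluxAt L x' b (p + 3) = 0 := by
      show flux (x' (p + 3 - 2)) (x' (p + 3 - 1)) (x' (p + 3)) (x' (p + 3 + 1)) (b (p + 3 + 1)) = 0
      rw [show p + 3 - 2 = p + 1 by ring, show p + 3 - 1 = p + 2 by ring, hxp2, h22.1]
      exact flux_01
    have hxP3 : x (p + 3) = 1 := by
      have := heq (p + 3)
      rw [show p + 3 - 1 = p + 2 by ring, h22.2, hG3, hxp3] at this
      linarith
    exact h111 (p + 1) ⟨hxP1, by rw [show p + 1 + 1 = p + 2 by ring]; exact hxP2,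
      by rw [show p + 1 + 2 = p + 3 by ring]; exact hxP3⟩
  funext j
  have := heq j
  rw [hG0 (j - 1), hG0 j] at this
  linarith

/-! ### finding the left end of a run of length ≥ 3 -/

lemma exists_run_start {L : ℕ} [NeZero L] (x : ZMod L → ℤ) (hx : IsBin L x)
    (c d : ZMod L) (hc : x c = 1 ∧ x (c + 1) = 1 ∧ x (c + 2) = 1) (hd : x d = 0) :
    ∃ s : ZMod L, x (s - 1) = 0 ∧ x s = 1 ∧ x (s + 1) = 1 ∧ x (s + 2) = 1 := by
  classical
  have hPex : ∃ n : ℕ, x (c - (n : ZMod L) - 1) = 0 := by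
    refine ⟨(c - d).val - 1, ?_⟩
    have hm : (((c - d).val : ℕ) : ZMod L) = c - d := ZMod.natCast_rightInverse _
    have hm1 : 1 ≤ (c - d).val := by
      rcases Nat.eq_zero_or_pos (c - d).val with h | h
      · exfalso
        have h0 : c - d = 0 := by rw [← hm, h]; norm_num
        have hdc : d = c := by linear_combination -h0
        rw [hdc, hc.1] at hd; norm_num at hd
      · exact h
    have : (((c - d).val - 1 : ℕ) : ZMod L) = ((c - d).val : ZMod L) - 1 := by
      push_cast [hm1]; ring
    rw [this, hm, show c - (c - d - 1) - 1 = d by ring]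
    exact hd
  set n₀ := Nat.find hPex with hn₀
  have hfind : x (c - (n₀ : ZMod L) - 1) = 0 := Nat.find_spec hPex
  have hone : ∀ k : ℕ, k < n₀ → x (c - (k : ZMod L) - 1) = 1 := by
    intro k hk
    rcases hx (c - (k : ZMod L) - 1) with h | h
    · exact absurd h (Nat.find_min hPex hk)
    · exact h
  refine ⟨c - (n₀ : ZMod L), hfind, ?_, ?_, ?_⟩
  · -- x s = 1
    match n₀, hone with
    | 0, _ => simpa using hc.1
    | (k+1), hone =>
      rw [show c - ((k + 1 : ℕ) : ZMod L) = c - (k : ZMod L) - 1 by push_cast; ring]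
      exact hone k (by omega)
  · -- x (s+1) = 1
    match n₀, hone with
    | 0, _ => simpa using hc.2.1
    | 1, _ => rw [show c - ((1 : ℕ) : ZMod L) + 1 = c by push_cast; ring]; exact hc.1
    | (k+2), hone =>
      rw [show c - ((k + 2 : ℕ) : ZMod L) + 1 = c - (k : ZMod L) - 1 by push_cast; ring]
      exact hone k (by omega)
  · -- x (s+2) = 1
    match n₀, hone with
    | 0, _ => simpa using hc.2.2
    | 1, _ => rw [show c - ((1 : ℕ) : ZMod L) + 2 = c + 1 by push_cast; ring]; exact hc.2.1
    | 2, _ => rw [show c - ((2 : ℕ) : ZMod L) + 2 = c by push_cast; ring]; exact hc.1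
    | (k+3), hone =>
      rw [show c - ((k + 3 : ℕ) : ZMod L) + 2 = c - (k : ZMod L) - 1 by push_cast; ring]
      exact hone k (by omega)

/-! ### construction of a different predecessor -/

lemma exists_other_pred {L : ℕ} (hL : 6 ≤ L) (x : ZMod L → ℤ) (hx : IsBin L x)
    (h010 : ∀ c : ZMod L, ¬(x c = 0 ∧ x (c + 1) = 1 ∧ x (c + 2) = 0))
    (s : ZMod L) (hs0 : x (s - 1) = 0) (hs1 : x s = 1) (hs2 : x (s + 1) = 1)
    (hs3 : x (s + 2) = 1) :
    ∃ x', inB L x' x ∧ x' ≠ x := by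
  haveI : NeZero L := ⟨by omega⟩
  classical
  set x' : ZMod L → ℤ := fun t => if t = s - 1 then 1 else if t = s then 0 else x t with hx'def
  set b' : ZMod L → ℤ := fun t => if t = s then 1 else 0 with hbdef
  have hne : ∀ k : ℕ, 0 < k → k < 6 → ((k : ℕ) : ZMod L) ≠ 0 := by
    intro k hk1 hk2 h
    rw [ZMod.natCast_eq_zero_iff] at h
    have := Nat.le_of_dvd hk1 h
    omega
  have h1 : (1 : ZMod L) ≠ 0 := by
    have := hne 1 (by norm_num) (by norm_num); rwa [Nat.cast_one] at this
  have h2 : (2 : ZMod L) ≠ 0 := by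
    have := hne 2 (by norm_num) (by norm_num); rwa [Nat.cast_ofNat] at this
  have h3 : (3 : ZMod L) ≠ 0 := by
    have := hne 3 (by norm_num) (by norm_num); rwa [Nat.cast_ofNat] at this
  have ex' : ∀ t : ZMod L, t ≠ s - 1 → t ≠ s → x' t = x t := by
    intro t ht1 ht2
    rw [hx'def]; dsimp only; rw [if_neg ht1, if_neg ht2]
  have ex1 : x' (s - 1) = 1 := by rw [hx'def]; dsimp only; rw [if_pos rfl]
  have ex0 : x' s = 0 := by
    rw [hx'def]; dsimp only
    rw [if_neg (fun h => h1 (by linear_combination h)), if_pos rfl]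
  have hx'bin : IsBin L x' := by
    intro t
    rw [hx'def]; dsimp only
    split_ifs
    · right; rfl
    · left; rfl
    · exact hx t
  have hb'bin : IsBin L b' := by
    intro t
    rw [hbdef]; dsimp only
    split_ifs
    · right; rfl
    · left; rfl
  have exm3 : x' (s - 3) = x (s - 3) :=
    ex' _ (fun h => h2 (by linear_combination -h)) (fun h => h3 (by linear_combination -h))
  have exm2 : x' (s - 2) = x (s - 2) :=
    ex' _ (fun h => h1 (by linear_combination -h)) (fun h => h2 (by linear_combination -h))
  have exp1 : x' (s + 1) = x (s + 1) :=
    ex' _ (fun h => h2 (by linear_combination h)) (fun h => h1 (by linear_combination h))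
  have exp2 : x' (s + 2) = x (s + 2) :=
    ex' _ (fun h => h3 (by linear_combination h)) (fun h => h2 (by linear_combination h))
  have hbS : b' s = 1 := by rw [hbdef]; dsimp only; rw [if_pos rfl]
  -- the flux across the bond (s-1, s) equals 1
  have hGs : fluxAt L x' b' (s - 1) = 1 := by
    show flux (x' (s - 1 - 2)) (x' (s - 1 - 1)) (x' (s - 1)) (x' (s - 1 + 1)) (b' (s - 1 + 1)) = 1
    rw [show s - 1 - 2 = s - 3 by ring, show s - 1 - 1 = s - 2 by ring,
      show s - 1 + 1 = s by ring, exm3, exm2, ex1, ex0, hbS]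
    rcases hx (s - 2) with h | h
    · rw [h]; exact flux_010 (hx (s - 3))
    · have h3' : x (s - 3) = 1 := by
        rcases hx (s - 3) with h' | h'
        · exact absurd ⟨h', by rw [show s - 3 + 1 = s - 2 by ring]; exact h,
            by rw [show s - 3 + 2 = s - 1 by ring]; exact hs0⟩ (h010 (s - 3))
        · exact h'
      rw [h, h3', flux_1110]
  -- all other fluxes vanish
  have hGother : ∀ j : ZMod L, j ≠ s - 1 → fluxAt L x' b' j = 0 := by
    intro j hj
    by_contra hF
    have hb0 : b' (j + 1) = 0 := by
      rw [hbdef]; dsimp only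
      rw [if_neg (fun h => hj (by linear_combination h))]
    have hF' : flux (x' (j - 2)) (x' (j - 1)) (x' j) (x' (j + 1)) 0 ≠ 0 := by
      intro h0
      apply hF
      show flux (x' (j - 2)) (x' (j - 1)) (x' j) (x' (j + 1)) (b' (j + 1)) = 0
      rw [hb0]; exact h0
    obtain ⟨hA, hB, hC⟩ := flux_b0_ne_zero hF'
    by_cases hjs : j = s
    · rw [hjs, ex0] at hB; norm_num at hB
    by_cases hjs1 : j = s + 1
    · rw [hjs1, show s + 1 + 1 = s + 2 by ring, exp2, hs3] at hC; norm_num at hC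
    by_cases hjs2 : j = s - 2
    · rw [hjs2, show s - 2 + 1 = s - 1 by ring, ex1] at hC; norm_num at hC
    · have e1 : j - 1 ≠ s - 1 := fun h => hjs (by linear_combination h)
      have e2 : j - 1 ≠ s := fun h => hjs1 (by linear_combination h)
      have e3 : j + 1 ≠ s - 1 := fun h => hjs2 (by linear_combination h)
      have e4 : j + 1 ≠ s := fun h => hj (by linear_combination h)
      rw [ex' _ e1 e2] at hA
      rw [ex' _ hj hjs] at hB
      rw [ex' _ e3 e4] at hC
      exact h010 (j - 1) ⟨hA, by rw [show j - 1 + 1 = j by ring]; exact hB,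
        by rw [show j - 1 + 2 = j + 1 by ring]; exact hC⟩
  have hupd : upd L x' b' = x := by
    funext j
    rw [upd_eq]
    by_cases hj1 : j = s - 1
    · rw [hj1, ex1, hGs, hGother (s - 1 - 1) (fun h => h1 (by linear_combination -h)), hs0]
      ring
    by_cases hj2 : j = s
    · rw [hj2, ex0, hGs, hGother s (fun h => h1 (by linear_combination h)), hs1]
      ring
    · rw [ex' j hj1 hj2, hGother (j - 1) (fun h => hj2 (by linear_combination h)),
        hGother j hj1]
      ring
  refine ⟨x', ⟨hx'bin, b', hb'bin, hupd⟩, ?_⟩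
  intro h
  have := congrFun h s
  rw [ex0, hs1] at this
  norm_num at this

/-- B(x) = {x} iff #1(x) ∈ {0, L}, or #010(x) = 0 and #111(x) = 0. -/
theorem B_eq_singleton_iff (L : ℕ) (hL : 6 ≤ L) (x : ZMod L → ℤ) (hx : IsBin L x) :
    ({x' | inB L x' x} : Set (ZMod L → ℤ)) = {x} ↔
      (patCount L x [1] = 0 ∨ patCount L x [1] = L) ∨
        (patCount L x [0, 1, 0] = 0 ∧ patCount L x [1, 1, 1] = 0) := by
  haveI : NeZero L := ⟨by omega⟩
  constructor
  · intro hB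
    have hxx : inB L x x := by
      have : x ∈ ({x} : Set (ZMod L → ℤ)) := rfl
      rw [← hB] at this; exact this
    obtain ⟨-, b, hb, hub⟩ := hxx
    have heq : ∀ j : ZMod L, fluxAt L x b (j - 1) = fluxAt L x b j := by
      intro j
      have := congrFun hub j
      rw [upd_eq] at this
      linarith
    have hconst : ∀ c : ZMod L, fluxAt L x b c = fluxAt L x b 0 := by
      have hn : ∀ n : ℕ, fluxAt L x b (-(n : ZMod L)) = fluxAt L x b 0 := by
        intro n
        induction n with
        | zero => norm_num
        | succ k ih =>
          rw [show -(((k + 1 : ℕ)) : ZMod L) = -(k : ZMod L) - 1 by push_cast; ring,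
            heq (-(k : ZMod L))]
          exact ih
      intro c
      have := hn ((-c).val)
      rwa [show (-((((-c).val : ℕ)) : ZMod L)) = c by
        rw [ZMod.natCast_rightInverse (-c)]; ring] at this
    have hG0or : fluxAt L x b 0 = 0 ∨ fluxAt L x b 0 = 1 := flux_bin (hb _)
    have hGzero : ∀ c : ZMod L, fluxAt L x b c = 0 := by
      rcases hG0or with h | h
      · intro c; rw [hconst c, h]
      · exfalso
        have h0' : flux (x ((0 : ZMod L) - 2)) (x (0 - 1)) (x 0) (x (0 + 1)) (b (0 + 1)) ≠ 0 := by
          show fluxAt L x b 0 ≠ 0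
          rw [h]; norm_num
        have ha := flux_ne_zero h0'
        have h1' : flux (x ((1 : ZMod L) - 2)) (x (1 - 1)) (x 1) (x (1 + 1)) (b (1 + 1)) ≠ 0 := by
          show fluxAt L x b 1 ≠ 0
          rw [hconst 1, h]; norm_num
        have hb' := flux_ne_zero h1'
        rw [show (0 : ZMod L) + 1 = 1 by ring] at ha
        rw [ha.2] at hb'
        exact absurd hb'.1 (by norm_num)
    have h010 : ∀ c : ZMod L, ¬(x c = 0 ∧ x (c + 1) = 1 ∧ x (c + 2) = 0) := by
      rintro c ⟨hc0, hc1, hc2⟩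
      have hone : fluxAt L x b (c + 1) = 1 := by
        show flux (x (c + 1 - 2)) (x (c + 1 - 1)) (x (c + 1)) (x (c + 1 + 1)) (b (c + 1 + 1)) = 1
        rw [show c + 1 - 1 = c by ring, show c + 1 + 1 = c + 2 by ring, hc0, hc1, hc2]
        exact flux_010 (hx (c + 1 - 2))
      rw [hGzero (c + 1)] at hone; norm_num at hone
    by_cases h111 : patCount L x [1, 1, 1] = 0
    · exact Or.inr ⟨(patCount_three_eq_zero_iff x 0 1 0).mpr h010, h111⟩
    by_cases hz : patCount L x [1] = 0
    · exact Or.inl (Or.inl hz)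
    by_cases hall : patCount L x [1] = L
    · exact Or.inl (Or.inr hall)
    exfalso
    have hcex : ∃ c : ZMod L, x c = 1 ∧ x (c + 1) = 1 ∧ x (c + 2) = 1 := by
      by_contra hno
      exact h111 ((patCount_three_eq_zero_iff x 1 1 1).mpr (fun c hc => hno ⟨c, hc⟩))
    have hdex : ∃ d : ZMod L, x d = 0 := by
      by_contra hno
      apply hall
      rw [patCount_one_eq_card_iff]
      intro c
      rcases hx c with h | h
      · exact absurd ⟨c, h⟩ hno
      · exact h
    obtain ⟨c, hc⟩ := hcex
    obtain ⟨d, hd⟩ := hdex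
    obtain ⟨s, hs0, hs1, hs2, hs3⟩ := exists_run_start x hx c d hc hd
    obtain ⟨x', hx'B, hx'ne⟩ := exists_other_pred hL x hx h010 s hs0 hs1 hs2 hs3
    apply hx'ne
    have : x' ∈ ({x} : Set (ZMod L → ℤ)) := by rw [← hB]; exact hx'B
    exact this
  · intro hrhs
    have hmem : inB L x x := by
      refine ⟨hx, fun _ => 0, fun j => Or.inl rfl, ?_⟩
      have hzero : ∀ p : ZMod L, fluxAt L x (fun _ => 0) p = 0 := by
        intro p
        by_contra hF
        have hF' : flux (x (p - 2)) (x (p - 1)) (x p) (x (p + 1)) 0 ≠ 0 := hF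
        obtain ⟨hA, hB2, hC⟩ := flux_b0_ne_zero hF'
        rcases hrhs with (h | h) | ⟨h010, -⟩
        · rw [patCount_one_eq_zero_iff] at h
          exact h p hB2
        · rw [patCount_one_eq_card_iff] at h
          rw [h (p + 1)] at hC; norm_num at hC
        · rw [patCount_three_eq_zero_iff] at h010
          exact h010 (p - 1) ⟨hA, by rw [show p - 1 + 1 = p by ring]; exact hB2,
            by rw [show p - 1 + 2 = p + 1 by ring]; exact hC⟩
      funext j
      rw [upd_eq, hzero (j - 1), hzero j]; ring
    apply Set.eq_singleton_iff_unique_mem.mpr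
    refine ⟨hmem, ?_⟩
    rintro x' ⟨hx'bin, b, hbbin, hub⟩
    rcases hrhs with (h | h) | ⟨h010, h111⟩
    · rw [patCount_one_eq_zero_iff] at h
      have hx0 : ∀ c : ZMod L, x c = 0 := fun c => (hx c).resolve_right (h c)
      have hs := sum_upd L x' b
      rw [hub] at hs
      have hsum : ∑ j : ZMod L, x' j = 0 := by
        rw [← hs]
        exact Finset.sum_eq_zero (fun j _ => hx0 j)
      have hnn : ∀ i ∈ (Finset.univ : Finset (ZMod L)), 0 ≤ x' i := by
        intro i _
        rcases hx'bin i with hh | hh <;> rw [hh] <;> norm_num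
      have hall0 := (Finset.sum_eq_zero_iff_of_nonneg hnn).mp hsum
      funext j
      rw [hx0 j]
      exact hall0 j (Finset.mem_univ j)
    · rw [patCount_one_eq_card_iff] at h
      have hs := sum_upd L x' b
      rw [hub] at hs
      have hsum : ∑ j : ZMod L, (x j - x' j) = 0 := by
        rw [Finset.sum_sub_distrib, hs]; ring
      have hnn : ∀ i ∈ (Finset.univ : Finset (ZMod L)), 0 ≤ x i - x' i := by
        intro i _
        rcases hx'bin i with hh | hh <;> rw [h i, hh] <;> norm_num
      have hall0 := (Finset.sum_eq_zero_iff_of_nonneg hnn).mp hsum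
      funext j
      have hj := hall0 j (Finset.mem_univ j)
      linarith
    · rw [patCount_three_eq_zero_iff] at h010 h111
      exact pred_eq_of_no010_no111 x x' b hx hx'bin hbbin hub h010 h111
end

section
/- Stationary distribution on an irreducible component: let 0 < α < 1 and let Ω be an irreducible component (an equivalence class of mutual reachability). Define Z_Ω := ∑_{k₁,k₂ ∈ ℕ} (α^{k₂}/(1−α)^{k₁+k₂}) · N_Ω(k₁,k₂) and p(x) := w_α(x)/Z_Ω for x ∈ Ω. Then ∑_{x ∈ Ω} p(x) = 1 and, for every x ∈ Ω, ∑_{x' ∈ Ω} f_α(x',x) · p(x') = p(x); i.e., p is a stationary probability distribution supported on Ω. -/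
/-- One step of the Markov chain: `y` is obtained from `x` by some bit field. -/
def step (L : ℕ) (x y : ZMod L → ℤ) : Prop :=
  ∃ b : ZMod L → ℤ, IsBin L b ∧ upd L x b = y

/-- `chain L n x y`: `y` is obtained from `x` by successively applying `n` bit fields. -/
def chain (L : ℕ) : ℕ → (ZMod L → ℤ) → (ZMod L → ℤ) → Prop
  | 0, x, y => x = y
  | n + 1, x, y => ∃ z, step L x z ∧ chain L n z y

/-- Reachability: some number of steps (possibly zero) maps `x` to `y`. -/
def reach (L : ℕ) (x y : ZMod L → ℤ) : Prop := ∃ n : ℕ, chain L n x y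

/-- The finite set of all binary configurations (or bit fields) on `ZMod L`. -/
def cube (L : ℕ) [NeZero L] : Finset (ZMod L → ℤ) :=
  Fintype.piFinset fun _ : ZMod L => ({0, 1} : Finset ℤ)

/-- The one-step transition probability `f_α(x',x)`. -/
noncomputable def transProb (L : ℕ) [NeZero L] (α : ℝ) (x' x : ZMod L → ℤ) : ℝ :=
  ∑ b ∈ cube L,
    (∏ j : ZMod L, α ^ (b j).toNat * (1 - α) ^ (1 - b j).toNat) *
      (if upd L x' b = x then 1 else 0)

/-- The weight `w_α(y) = α^{#010(y)} / (1-α)^{#1110(y)+#010(y)}`. -/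
noncomputable def weight (L : ℕ) (α : ℝ) (y : ZMod L → ℤ) : ℝ :=
  α ^ patCount L y [0, 1, 0] /
    (1 - α) ^ (patCount L y [1, 1, 1, 0] + patCount L y [0, 1, 0])


/-!
Let `jump v b j ∈ {0, 1}` be the number of particles moving from `j - 1` to `j`, so that
`U(v, b) = v + J - J(· + 1)`. A predecessor `(v, b)` of a configuration `x` is determined by the
set `M` of sites where a particle has just arrived, together with the coins `b j` at the sites `j`
where `v` reads `1110` up to `j`; all other coins are free. The set `M` contains every isolated
particle of `x` and, besides, any choice of first particles of runs of length at least three.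
Summed over the free coins, the predecessors with arrival set `M` contribute
`w_α(v) · P(b) = (α / (1 - α)) ^ |M|`, and summing over `M` gives
`(α / (1 - α)) ^ #010(x) · (1 / (1 - α)) ^ #0111(x)`, which is `w_α(x)` because `#0111 = #1110` on
a ring. Hence `w_α` is stationary on all of `{0,1}^L`.

A stationary measure with full support makes every transition reversible, since otherwise mass
would leak out of the set of configurations that can return to a given one. So an irreducible
component contains all predecessors of its elements, and stationarity restricts to it.
-/
open Finset

theorem Finset.card_filter_comp_add_right {G : Type*} [AddGroup G] [Fintype G]
    (p : G → Prop) [DecidablePred p] (c : G) :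
    #(univ.filter fun q => p (q + c)) = #(univ.filter p) :=
  card_nbij' (· + c) (· - c) (by simp [Set.MapsTo]) (by simp [Set.MapsTo])
    (fun _ _ => by simp) (fun _ _ => by simp)

theorem Finset.sum_range_sum_range_mul_card_filter {β : Type*} (s : Finset β) (f g : β → ℕ)
    (F : ℕ → ℕ → ℝ) {n : ℕ} (hf : ∀ y ∈ s, f y ≤ n) (hg : ∀ y ∈ s, g y ≤ n) :
    ∑ k₁ ∈ range (n + 1), ∑ k₂ ∈ range (n + 1),
        F k₁ k₂ * #(s.filter fun y => f y = k₁ ∧ g y = k₂) = ∑ y ∈ s, F (f y) (g y) := by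
  classical
  rw [← sum_fiberwise_of_maps_to (t := range (n + 1) ×ˢ range (n + 1)) (g := fun y => (f y, g y))
    fun y hy => by simp [hf y hy, hg y hy], sum_product]
  refine sum_congr rfl fun k₁ _ => sum_congr rfl fun k₂ _ => ?_
  rw [mul_comm, ← nsmul_eq_mul, ← sum_const]
  refine sum_congr (by simp [Prod.ext_iff]) fun y hy => ?_
  obtain ⟨rfl, rfl⟩ := (mem_filter.1 hy).2
  rfl

theorem mem_of_stationary_of_ne_zero {ι : Type*} {S R : Finset ι} (hRS : R ⊆ S)
    {P : ι → ι → ℝ} {w : ι → ℝ} (hP : ∀ u z, 0 ≤ P u z) (hrow : ∀ u ∈ S, ∑ z ∈ S, P u z = 1)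
    (hw : ∀ u ∈ S, 0 < w u) (hstat : ∀ z ∈ S, ∑ u ∈ S, P u z * w u = w z)
    (hR : ∀ u ∈ S, ∀ z ∈ R, P u z ≠ 0 → u ∈ R) {u z : ι} (hu : u ∈ R) (hz : z ∈ S)
    (huz : P u z ≠ 0) : z ∈ R := by
  classical
  by_contra hzR
  have hinflow : ∀ z ∈ R, ∑ u ∈ R, P u z * w u = w z := fun z hz =>
    (sum_subset hRS fun u hu huR => by
      rw [not_ne_iff.1 fun h => huR (hR u hu z hz h), zero_mul]).trans (hstat z (hRS hz))
  have hleak : ∑ u ∈ R, w u * ∑ z ∈ S \ R, P u z = 0 := by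
    calc ∑ u ∈ R, w u * ∑ z ∈ S \ R, P u z
        = ∑ u ∈ R, w u - ∑ z ∈ R, ∑ u ∈ R, P u z * w u := by
          rw [sum_comm, ← sum_sub_distrib]
          refine sum_congr rfl fun u hu => ?_
          have hsplit := hrow u (hRS hu)
          rw [← sum_sdiff hRS] at hsplit
          rw [← sum_mul]
          linear_combination w u * hsplit
      _ = 0 := by rw [sum_congr rfl hinflow, sub_self]
  have hu0 := (sum_eq_zero_iff_of_nonneg fun u hu =>
    mul_nonneg (hw u (hRS hu)).le (sum_nonneg fun z _ => hP u z)).1 hleak u hu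
  have hout := (mul_eq_zero.1 hu0).resolve_left (hw u (hRS hu)).ne'
  exact huz ((sum_eq_zero_iff_of_nonneg fun z _ => hP u z).1 hout z (mem_sdiff.2 ⟨hz, hzR⟩))

namespace FluxChain

section AnyLength

variable {L : ℕ} {v b x : ZMod L → ℤ}

/-- The number (`0` or `1`) of particles jumping from `j - 1` to `j`. -/
def jump (v b : ZMod L → ℤ) (j : ZMod L) : ℤ :=
  flux (v (j - 3)) (v (j - 2)) (v (j - 1)) (v j) (b j)

theorem upd_apply (v b : ZMod L → ℤ) (j : ZMod L) :
    upd L v b j = v j + jump v b j - jump v b (j + 1) := by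
  simp only [upd, jump, show j + 1 - 3 = j - 2 by ring, show j + 1 - 2 = j - 1 by ring,
    add_sub_cancel_right]

theorem jump_spec (hv : IsBin L v) (hb : IsBin L b) (j : ZMod L) :
    (jump v b j = 0 ∨ jump v b j = 1) ∧
    (jump v b j = 1 → v (j - 1) = 1 ∧ v j = 0) ∧
    (v (j - 2) = 0 → v (j - 1) = 1 → v j = 0 → jump v b j = 1) ∧
    (v (j - 3) = 0 → v (j - 2) = 1 → jump v b j = 0) ∧
    (v (j - 3) = 1 → v (j - 2) = 1 → v (j - 1) = 1 → v j = 0 → jump v b j = b j) := by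
  unfold jump
  rcases hv (j - 3) with h₃ | h₃ <;> rcases hv (j - 2) with h₂ | h₂ <;>
    rcases hv (j - 1) with h₁ | h₁ <;> rcases hv j with h₀ | h₀ <;>
    rcases hb j with hb | hb <;> simp [flux, h₃, h₂, h₁, h₀, hb]

theorem upd_isBin (hv : IsBin L v) (hb : IsBin L b) : IsBin L (upd L v b) := by
  intro j
  have h₀ := jump_spec hv hb j
  have h₁ := jump_spec hv hb (j + 1)
  have := hv j
  rw [upd_apply]
  ring_nf at h₀ h₁ ⊢
  grind

theorem chain_append {m n : ℕ} {x y z : ZMod L → ℤ} (hxy : chain L m x y)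
    (hyz : chain L n y z) : chain L (n + m) x z := by
  induction m generalizing x with
  | zero => exact hxy ▸ hyz
  | succ m ih =>
    obtain ⟨w, hxw, hwy⟩ := hxy
    exact ⟨w, hxw, ih hwy⟩

theorem reach_trans {y z : ZMod L → ℤ} (hxy : reach L x y) (hyz : reach L y z) :
    reach L x z :=
  let ⟨_, hm⟩ := hxy
  let ⟨_, hn⟩ := hyz
  ⟨_, chain_append hm hn⟩

theorem reach_of_step {y : ZMod L → ℤ} (h : step L x y) : reach L x y := ⟨1, y, h, rfl⟩

theorem reach_isBin {y : ZMod L → ℤ} (hxy : reach L x y) (hx : IsBin L x) : IsBin L y := by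
  obtain ⟨n, hn⟩ := hxy
  induction n generalizing x with
  | zero => exact hn ▸ hx
  | succ n ih =>
    obtain ⟨w, ⟨b, hb, rfl⟩, hwy⟩ := hn
    exact ih (upd_isBin hx hb) hwy

theorem patCount_le (v : ZMod L → ℤ) (w : List ℤ) : patCount L v w ≤ L :=
  (card_filter_le _ _).trans (card_range L).le

theorem weight_pos {α : ℝ} (hα₀ : 0 < α) (hα₁ : α < 1) (v : ZMod L → ℤ) : 0 < weight L α v :=
  div_pos (pow_pos hα₀ _) (pow_pos (sub_pos.2 hα₁) _)

end AnyLength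

variable {L : ℕ} [NeZero L] {v b x : ZMod L → ℤ} {M : Finset (ZMod L)} {α : ℝ}

section Predecessors

def isolated (x : ZMod L → ℤ) : Finset (ZMod L) :=
  univ.filter fun q => x (q - 1) = 0 ∧ x q = 1 ∧ x (q + 1) = 0

def runStarts (x : ZMod L → ℤ) : Finset (ZMod L) :=
  univ.filter fun q => x (q - 1) = 0 ∧ x q = 1 ∧ x (q + 1) = 1 ∧ x (q + 2) = 1

def coinSites (v : ZMod L → ℤ) : Finset (ZMod L) :=
  univ.filter fun j => v (j - 3) = 1 ∧ v (j - 2) = 1 ∧ v (j - 1) = 1 ∧ v j = 0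

def jumpSet (v b : ZMod L → ℤ) : Finset (ZMod L) :=
  univ.filter fun j => jump v b j = 1

def admissible (x : ZMod L → ℤ) : Finset (Finset (ZMod L)) :=
  (runStarts x).powerset.image (isolated x ∪ ·)

/-- The configuration before the particles arriving at the sites of `M` made their jumps. -/
def predecessor (x : ZMod L → ℤ) (M : Finset (ZMod L)) (j : ZMod L) : ℤ :=
  x j - (if j ∈ M then 1 else 0) + (if j + 1 ∈ M then 1 else 0)

/- Each local statement below follows from the update rule at a few sites: it is instantiated
there, the site indices are normalised by `ring_nf`, and `grind` does the case analysis on bits. -/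

theorem isolated_subset_jumpSet (hv : IsBin L v) (hb : IsBin L b) :
    isolated (upd L v b) ⊆ jumpSet v b := by
  intro r hr
  simp only [isolated, jumpSet, mem_filter_univ, upd_apply] at hr ⊢
  have h₁ := jump_spec hv hb (r - 1)
  have h₂ := jump_spec hv hb r
  have h₃ := jump_spec hv hb (r + 1)
  have h₄ := jump_spec hv hb (r + 2)
  have := hv (r - 1); have := hv r; have := hv (r + 1)
  ring_nf at *
  grind

theorem jumpSet_subset (hv : IsBin L v) (hb : IsBin L b) :
    jumpSet v b ⊆ isolated (upd L v b) ∪ runStarts (upd L v b) := by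
  intro q hq
  simp only [isolated, runStarts, jumpSet, mem_union, mem_filter_univ, upd_apply] at hq ⊢
  have h₁ := jump_spec hv hb (q - 1)
  have h₂ := jump_spec hv hb q
  have h₃ := jump_spec hv hb (q + 1)
  have h₄ := jump_spec hv hb (q + 2)
  have h₅ := jump_spec hv hb (q + 3)
  have := hv (q - 1); have := hv q; have := hv (q + 1); have := hv (q + 2)
  ring_nf at *
  grind

theorem eq_ite_mem_jumpSet_of_mem_coinSites (hv : IsBin L v) (hb : IsBin L b) {j : ZMod L}
    (hj : j ∈ coinSites v) : b j = if j ∈ jumpSet v b then 1 else 0 := by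
  simp only [coinSites, jumpSet, mem_filter_univ] at hj ⊢
  have := jump_spec hv hb j
  have := hb j
  grind

theorem predecessor_jumpSet (hv : IsBin L v) (hb : IsBin L b) :
    predecessor (upd L v b) (jumpSet v b) = v := by
  funext j
  have h₀ := (jump_spec hv hb j).1
  have h₁ := (jump_spec hv hb (j + 1)).1
  simp only [predecessor, jumpSet, mem_filter_univ, upd_apply]
  grind

theorem disjoint_isolated_runStarts (x : ZMod L → ℤ) : Disjoint (isolated x) (runStarts x) := by
  simp only [disjoint_left, isolated, runStarts, mem_filter_univ]
  grind

theorem mem_admissible : M ∈ admissible x ↔ isolated x ⊆ M ∧ M ⊆ isolated x ∪ runStarts x := by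
  constructor
  · simp only [admissible, mem_image, mem_powerset]
    rintro ⟨T, hT, rfl⟩
    exact ⟨subset_union_left, union_subset_union_right hT⟩
  · rintro ⟨hI, hM⟩
    exact mem_image.2 ⟨M \ isolated x, mem_powerset.2 (sdiff_le_iff.2 hM), union_sdiff_of_subset hI⟩

theorem admissible_spec (hM : M ∈ admissible x) (q : ZMod L) :
    (q ∈ M → x (q - 1) = 0 ∧ x q = 1 ∧ (x (q + 1) = 0 ∨ x (q + 1) = 1 ∧ x (q + 2) = 1)) ∧
    (x (q - 1) = 0 → x q = 1 → x (q + 1) = 0 → q ∈ M) := by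
  obtain ⟨hI, hM⟩ := mem_admissible.1 hM
  constructor
  · intro hq
    have := hM hq
    simp only [isolated, runStarts, mem_union, mem_filter_univ] at this
    grind
  · intro h₁ h₂ h₃
    exact hI (by simp [isolated, h₁, h₂, h₃])

theorem predecessor_isBin (hx : IsBin L x) (hM : M ∈ admissible x) :
    IsBin L (predecessor x M) := by
  intro j
  have h₀ := admissible_spec hM j
  have h₁ := admissible_spec hM (j + 1)
  have := hx j
  simp only [predecessor]
  ring_nf at *
  grind

theorem mem_iff_of_mem_admissible (hM : M ∈ admissible x) (q : ZMod L) :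
    q ∈ M ↔ x q = 1 ∧ predecessor x M q = 0 := by
  have h₀ := admissible_spec hM q
  have h₁ := admissible_spec hM (q + 1)
  simp only [predecessor]
  ring_nf at *
  grind

theorem jump_predecessor (hx : IsBin L x) (hM : M ∈ admissible x) (hb : IsBin L b)
    (hcoin : ∀ j ∈ coinSites (predecessor x M), b j = if j ∈ M then 1 else 0) (q : ZMod L) :
    jump (predecessor x M) b q = if q ∈ M then 1 else 0 := by
  have hJ := jump_spec (predecessor_isBin hx hM) hb q
  have hc := hcoin q
  have h₀ := admissible_spec hM (q - 3)
  have h₁ := admissible_spec hM (q - 2)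
  have h₂ := admissible_spec hM (q - 1)
  have h₃ := admissible_spec hM q
  have h₄ := admissible_spec hM (q + 1)
  have := hx (q - 3); have := hx (q - 2); have := hx (q - 1); have := hx q
  simp only [coinSites, predecessor] at hJ hc
  ring_nf at *
  grind

theorem upd_predecessor (hx : IsBin L x) (hM : M ∈ admissible x) (hb : IsBin L b)
    (hcoin : ∀ j ∈ coinSites (predecessor x M), b j = if j ∈ M then 1 else 0) :
    upd L (predecessor x M) b = x := by
  funext j
  rw [upd_apply, jump_predecessor hx hM hb hcoin, jump_predecessor hx hM hb hcoin, predecessor]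
  ring

end Predecessors

section PatternCounts

theorem card_isolated_predecessor (hx : IsBin L x) (hM : M ∈ admissible x) :
    #(isolated (predecessor x M)) = #(M \ coinSites (predecessor x M)) := by
  refine card_nbij' (· + 1) (· - 1) (fun c hc => ?_) (fun q hq => ?_) (fun c _ => by simp)
    (fun q _ => by simp)
  · simp only [mem_coe, mem_sdiff, isolated, coinSites, mem_filter_univ] at hc ⊢
    have h₀ := admissible_spec hM (c - 1)
    have h₁ := admissible_spec hM c
    have h₂ := admissible_spec hM (c + 1)
    have h₃ := admissible_spec hM (c + 2)
    have := hx (c - 1); have := hx c; have := hx (c + 1)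
    simp only [predecessor] at hc ⊢
    ring_nf at *
    grind
  · simp only [mem_coe, mem_sdiff, isolated, coinSites, mem_filter_univ] at hq ⊢
    have h₀ := admissible_spec hM (q - 3)
    have h₁ := admissible_spec hM (q - 2)
    have h₂ := admissible_spec hM (q - 1)
    have h₃ := admissible_spec hM q
    have h₄ := admissible_spec hM (q + 1)
    have := hx (q - 4); have := hx (q - 3); have := hx (q - 2); have := hx (q - 1); have := hx q
    simp only [predecessor] at hq ⊢
    ring_nf at *
    grind

theorem patCount_eq_card (v : ZMod L → ℤ) (w : List ℤ) :
    patCount L v w = #(univ.filter fun q : ZMod L => ∀ i < w.length, v (q + i) = w.getD i 0) := by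
  refine card_nbij' (fun j => (j : ZMod L)) ZMod.val (fun j hj => ?_) (fun q hq => ?_)
    (fun j hj => ZMod.val_cast_of_lt (mem_range.1 (mem_filter.1 hj).1))
    (fun q _ => ZMod.natCast_zmod_val q)
  · simp only [coe_filter, mem_range, Set.mem_ofPred_eq, Nat.cast_add] at hj ⊢
    simpa using hj.2
  · simp only [coe_filter, mem_range, mem_univ, true_and, Set.mem_ofPred_eq, Nat.cast_add,
      ZMod.natCast_val, ZMod.cast_id', id] at hq ⊢
    exact ⟨ZMod.val_lt q, hq⟩

theorem patCount_zero_one_zero (v : ZMod L → ℤ) : patCount L v [0, 1, 0] = #(isolated v) := by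
  rw [patCount_eq_card, ← card_filter_comp_add_right _ (-1), isolated]
  congr 1
  ext q
  simp only [mem_filter_univ, List.length_cons, List.length_nil, zero_add,
    Nat.forall_lt_succ_right, Nat.not_lt_zero, IsEmpty.forall_iff, implies_true, true_and,
    List.getD_cons_zero, List.getD_cons_succ, Nat.cast_zero, Nat.cast_one, add_zero, and_assoc]
  ring_nf

theorem patCount_one_one_one_zero (v : ZMod L → ℤ) :
    patCount L v [1, 1, 1, 0] = #(coinSites v) := by
  rw [patCount_eq_card, ← card_filter_comp_add_right _ (-3), coinSites]
  congr 1
  ext q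
  simp only [mem_filter_univ, List.length_cons, List.length_nil, zero_add,
    Nat.forall_lt_succ_right, Nat.not_lt_zero, IsEmpty.forall_iff, implies_true, true_and,
    List.getD_cons_zero, List.getD_cons_succ, Nat.cast_zero, Nat.cast_one, add_zero, and_assoc]
  ring_nf

/-- `#0111 = #1110`: both are `#111 - #1111`, counted from the left and from the right end. -/
theorem card_runStarts (hx : IsBin L x) : #(runStarts x) = #(coinSites x) := by
  let runs3 := univ.filter fun q => x q = 1 ∧ x (q + 1) = 1 ∧ x (q + 2) = 1
  have hleft := card_filter_add_card_filter_not (s := runs3) fun q => x (q - 1) = 1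
  have hright := card_filter_add_card_filter_not (s := runs3) fun q => x (q + 3) = 1
  have hruns4 : #(runs3.filter fun q => x (q - 1) = 1) =
      #(runs3.filter fun q => x (q + 3) = 1) := by
    rw [filter_filter, filter_filter, ← card_filter_comp_add_right _ 1]
    congr 1
    ext q
    simp only [mem_filter_univ]
    ring_nf
    grind
  have hstarts : runs3.filter (fun q => ¬x (q - 1) = 1) = runStarts x := by
    ext q
    have := hx (q - 1)
    simp only [runs3, runStarts, filter_filter, mem_filter_univ]
    grind
  have hcoins : #(runs3.filter fun q => ¬x (q + 3) = 1) = #(coinSites x) := by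
    rw [filter_filter, ← card_filter_comp_add_right _ (-3), coinSites]
    congr 1
    ext q
    have := hx q
    simp only [mem_filter_univ]
    ring_nf
    grind
  rw [← hstarts, ← hcoins]
  omega

end PatternCounts

section Probabilities

def bitProb (α : ℝ) (t : ℤ) : ℝ := α ^ t.toNat * (1 - α) ^ (1 - t).toNat

def fieldProb (α : ℝ) (b : ZMod L → ℤ) : ℝ := ∏ j, bitProb α (b j)

@[simp] theorem bitProb_zero : bitProb α 0 = 1 - α := by simp [bitProb]

@[simp] theorem bitProb_one : bitProb α 1 = α := by simp [bitProb]

theorem fieldProb_pos (hα₀ : 0 < α) (hα₁ : α < 1) (b : ZMod L → ℤ) : 0 < fieldProb α b :=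
  prod_pos fun _ _ => mul_pos (pow_pos hα₀ _) (pow_pos (sub_pos.2 hα₁) _)

theorem mem_cube : b ∈ cube L ↔ IsBin L b := by
  simp [cube, Fintype.mem_piFinset, IsBin]

theorem sum_fieldProb_cube : ∑ b ∈ cube L, fieldProb α b = 1 := by
  simp only [cube, fieldProb]
  rw [← prod_univ_sum]
  simp

theorem transProb_eq_sum (x' x : ZMod L → ℤ) :
    transProb L α x' x = ∑ b ∈ cube L, if upd L x' b = x then fieldProb α b else 0 := by
  simp [transProb, fieldProb, bitProb]

theorem transProb_nonneg (hα₀ : 0 < α) (hα₁ : α < 1) (x' x : ZMod L → ℤ) :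
    0 ≤ transProb L α x' x := by
  rw [transProb_eq_sum]
  exact sum_nonneg fun b _ => by split_ifs <;> simp [(fieldProb_pos hα₀ hα₁ b).le]

theorem sum_transProb_cube {x' : ZMod L → ℤ} (hx' : IsBin L x') :
    ∑ x ∈ cube L, transProb L α x' x = 1 := by
  simp_rw [transProb_eq_sum]
  rw [sum_comm, ← sum_fieldProb_cube (L := L) (α := α)]
  refine sum_congr rfl fun b hb => ?_
  rw [sum_ite_eq (cube L) (upd L x' b)]
  simp [mem_cube.2 (upd_isBin hx' (mem_cube.1 hb))]

theorem transProb_ne_zero_iff (hα₀ : 0 < α) (hα₁ : α < 1) {x' : ZMod L → ℤ} :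
    transProb L α x' x ≠ 0 ↔ step L x' x := by
  have hnonneg : ∀ b ∈ cube L, 0 ≤ if upd L x' b = x then fieldProb α b else 0 := fun b _ => by
    split_ifs <;> simp [(fieldProb_pos hα₀ hα₁ b).le]
  rw [transProb_eq_sum, Ne, sum_eq_zero_iff_of_nonneg hnonneg]
  simp [step, mem_cube, (fieldProb_pos hα₀ hα₁ _).ne']

end Probabilities

section Stationarity

def coinFields (x : ZMod L → ℤ) (M : Finset (ZMod L)) : Finset (ZMod L → ℤ) :=
  Fintype.piFinset fun j =>
    if j ∈ coinSites (predecessor x M) then {if j ∈ M then 1 else 0} else {0, 1}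

theorem mem_coinFields : b ∈ coinFields x M ↔
    IsBin L b ∧ ∀ j ∈ coinSites (predecessor x M), b j = if j ∈ M then 1 else 0 := by
  simp only [coinFields, Fintype.mem_piFinset, IsBin]
  refine ⟨fun h => ⟨fun j => ?_, fun j hj => by simpa [hj] using h j⟩, fun ⟨hb, hc⟩ j => ?_⟩
  · have := h j
    split_ifs at this <;> simp_all
  · by_cases hj : j ∈ coinSites (predecessor x M)
    · simp [hj, hc j hj]
    · simpa [hj] using hb j

theorem sum_predecessors_eq_sum_sigma (hx : IsBin L x)
    (f : (ZMod L → ℤ) → (ZMod L → ℤ) → ℝ) :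
    ∑ p ∈ (cube L ×ˢ cube L).filter (fun p => upd L p.1 p.2 = x), f p.1 p.2 =
      ∑ s ∈ (admissible x).sigma (coinFields x), f (predecessor x s.1) s.2 := by
  symm
  refine sum_nbij (fun s => (predecessor x s.1, s.2)) ?_ ?_ ?_ fun _ _ => rfl
  · rintro ⟨M, b⟩ hs
    obtain ⟨hM, hb⟩ := mem_sigma.1 hs
    obtain ⟨hb, hcoin⟩ := mem_coinFields.1 hb
    simp only [mem_filter, mem_product, mem_cube]
    exact ⟨⟨predecessor_isBin hx hM, hb⟩, upd_predecessor hx hM hb hcoin⟩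
  · rintro ⟨M, b⟩ hs ⟨M', b'⟩ hs' h
    obtain ⟨hpred, rfl⟩ := Prod.mk.inj h
    obtain rfl : M = M' := by
      ext q
      rw [mem_iff_of_mem_admissible (mem_sigma.1 hs).1,
        mem_iff_of_mem_admissible (mem_sigma.1 hs').1, hpred]
    rfl
  · rintro ⟨v, b⟩ hp
    simp only [coe_filter, mem_product, mem_cube, Set.mem_ofPred_eq] at hp
    obtain ⟨⟨hv, hb⟩, rfl⟩ := hp
    refine ⟨⟨jumpSet v b, b⟩, mem_sigma.2 ⟨?_, mem_coinFields.2 ⟨hb, ?_⟩⟩, ?_⟩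
    · exact mem_admissible.2 ⟨isolated_subset_jumpSet hv hb, jumpSet_subset hv hb⟩
    · rw [predecessor_jumpSet hv hb]
      exact fun j hj => eq_ite_mem_jumpSet_of_mem_coinSites hv hb hj
    · simp [predecessor_jumpSet hv hb]

theorem sum_fieldProb_coinFields :
    ∑ b ∈ coinFields x M, fieldProb α b =
      ∏ j ∈ coinSites (predecessor x M), if j ∈ M then α else 1 - α := by
  rw [← univ_inter (coinSites _), ← prod_ite_mem]
  simp only [coinFields, fieldProb]
  rw [← prod_univ_sum]
  refine prod_congr rfl fun j _ => ?_
  split_ifs <;> simp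

theorem weight_predecessor_mul (hα₁ : α < 1) (hx : IsBin L x) (hM : M ∈ admissible x) :
    weight L α (predecessor x M) *
        ∏ j ∈ coinSites (predecessor x M), (if j ∈ M then α else 1 - α) =
      (α / (1 - α)) ^ #M := by
  set C := coinSites (predecessor x M)
  have hC : #C = #(C.filter (· ∈ M)) + #(C.filter (· ∉ M)) :=
    (card_filter_add_card_filter_not _).symm
  have hMcard : #M = #(M \ C) + #(C.filter (· ∈ M)) := by
    rw [filter_mem_eq_inter, inter_comm, card_sdiff_add_card_inter]
  rw [prod_ite, prod_const, prod_const, weight, patCount_zero_one_zero,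
    patCount_one_one_one_zero, card_isolated_predecessor hx hM, hC, hMcard]
  generalize #(M \ C) = a, #(C.filter (· ∈ M)) = b, #(C.filter (· ∉ M)) = c
  have : 1 - α ≠ 0 := (sub_pos.2 hα₁).ne'
  rw [div_pow, pow_add, pow_add, pow_add, pow_add]
  field_simp

theorem sum_admissible_pow (x : ZMod L → ℤ) (r : ℝ) :
    ∑ M ∈ admissible x, r ^ #M = r ^ #(isolated x) * (r + 1) ^ #(runStarts x) := by
  have hdisj {T} (hT : T ∈ (runStarts x).powerset) : Disjoint (isolated x) T :=
    (disjoint_isolated_runStarts x).mono_right (mem_powerset.1 hT)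
  rw [admissible, sum_image fun T hT T' hT' h => by
    rw [← union_sdiff_cancel_left (hdisj hT), h, union_sdiff_cancel_left (hdisj hT')]]
  rw [← sum_pow_mul_eq_add_pow, mul_sum]
  refine sum_congr rfl fun T hT => ?_
  rw [card_union_of_disjoint (hdisj hT), pow_add, one_pow, mul_one]

theorem sum_transProb_mul_weight (hα₁ : α < 1) (hx : IsBin L x) :
    ∑ v ∈ cube L, transProb L α v x * weight L α v = weight L α x := by
  have hpairs : ∑ v ∈ cube L, transProb L α v x * weight L α v =
      ∑ p ∈ (cube L ×ˢ cube L).filter (fun p => upd L p.1 p.2 = x),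
        fieldProb α p.2 * weight L α p.1 := by
    simp_rw [transProb_eq_sum, sum_mul, ite_mul, zero_mul]
    rw [sum_filter, sum_product]
  rw [hpairs, sum_predecessors_eq_sum_sigma hx fun v b => fieldProb α b * weight L α v, sum_sigma]
  calc ∑ M ∈ admissible x, ∑ b ∈ coinFields x M, fieldProb α b * weight L α (predecessor x M)
      = ∑ M ∈ admissible x, (α / (1 - α)) ^ #M := sum_congr rfl fun M hM => by
        rw [← sum_mul, sum_fieldProb_coinFields, mul_comm, weight_predecessor_mul hα₁ hx hM]
    _ = weight L α x := by
      rw [sum_admissible_pow, card_runStarts hx, ← patCount_one_one_one_zero,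
        ← patCount_zero_one_zero, weight]
      generalize patCount L x [0, 1, 0] = a, patCount L x [1, 1, 1, 0] = c
      have : 1 - α ≠ 0 := (sub_pos.2 hα₁).ne'
      rw [div_add_one this, div_pow, div_pow, add_sub_cancel, one_pow, pow_add]
      field_simp

/-- Any `α ∈ (0, 1)` gives the same transition graph; `α = 1 / 2` is an arbitrary choice. -/
theorem reach_of_step_of_isBin {y : ZMod L → ℤ} (hx : IsBin L x) (hxy : step L x y) :
    reach L y x := by
  classical
  have hα₀ : (0 : ℝ) < 1 / 2 := by norm_num
  have hα₁ : (1 / 2 : ℝ) < 1 := by norm_num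
  obtain ⟨b, hb, rfl⟩ := hxy
  have hmem := mem_of_stationary_of_ne_zero (filter_subset (fun z => reach L z x) (cube L))
    (transProb_nonneg hα₀ hα₁) (fun u hu => sum_transProb_cube (mem_cube.1 hu))
    (fun u _ => weight_pos hα₀ hα₁ u)
    (fun z hz => sum_transProb_mul_weight hα₁ (mem_cube.1 hz))
    (fun u hu z hz huz => mem_filter.2 ⟨hu, reach_trans
      (reach_of_step ((transProb_ne_zero_iff hα₀ hα₁).1 huz)) (mem_filter.1 hz).2⟩)
    (mem_filter.2 ⟨mem_cube.2 hx, 0, rfl⟩) (mem_cube.2 (upd_isBin hx hb))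
    ((transProb_ne_zero_iff hα₀ hα₁).2 ⟨b, hb, rfl⟩)
  exact (mem_filter.1 hmem).2

end Stationarity

end FluxChain

open FluxChain

theorem stationary_distribution_on_component_general (L : ℕ) [NeZero L]
    (α : ℝ) (hα0 : 0 < α) (hα1 : α < 1)
    (Ω : Finset (ZMod L → ℤ)) (x₀ : ZMod L → ℤ) (hx₀ : IsBin L x₀)
    (hΩ : ∀ y, y ∈ Ω ↔ reach L x₀ y ∧ reach L y x₀)
    (Z : ℝ)
    (hZ : Z = ∑ k₁ ∈ Finset.range (L + 1), ∑ k₂ ∈ Finset.range (L + 1),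
      α ^ k₂ / (1 - α) ^ (k₁ + k₂) *
        ((Ω.filter fun y =>
            patCount L y [1, 1, 1, 0] = k₁ ∧ patCount L y [0, 1, 0] = k₂).card : ℝ)) :
    (∑ x ∈ Ω, weight L α x / Z = 1) ∧
      ∀ x ∈ Ω, ∑ x' ∈ Ω, transProb L α x' x * (weight L α x' / Z) = weight L α x / Z := by
  have hbin : ∀ y ∈ Ω, IsBin L y := fun y hy => reach_isBin ((hΩ y).1 hy).1 hx₀
  have hZ' : Z = ∑ y ∈ Ω, weight L α y := hZ.trans <|
    sum_range_sum_range_mul_card_filter Ω _ _ (fun k₁ k₂ => α ^ k₂ / (1 - α) ^ (k₁ + k₂))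
      (fun y _ => patCount_le y _) (fun y _ => patCount_le y _)
  have hZpos : 0 < Z := hZ' ▸ sum_pos (fun y _ => weight_pos hα0 hα1 y)
    ⟨x₀, (hΩ x₀).2 ⟨⟨0, rfl⟩, ⟨0, rfl⟩⟩⟩
  refine ⟨by rw [← sum_div, ← hZ', div_self hZpos.ne'], fun x hx => ?_⟩
  have hpred : ∀ u ∈ cube L, u ∉ Ω → transProb L α u x = 0 := fun u hu huΩ => by
    by_contra hux
    have hstep := (transProb_ne_zero_iff hα0 hα1).1 hux
    exact huΩ <| (hΩ u).2 ⟨reach_trans ((hΩ x).1 hx).1 (reach_of_step_of_isBin (mem_cube.1 hu) hstep),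
      reach_trans (reach_of_step hstep) ((hΩ x).1 hx).2⟩
  simp_rw [mul_div_assoc', ← sum_div]
  rw [sum_subset (fun y hy => mem_cube.2 (hbin y hy)) fun u hu huΩ => by
      rw [hpred u hu huΩ, zero_mul],
    sum_transProb_mul_weight hα1 (hbin x hx)]

/-- the normalized weight is a stationary probability distribution on each
irreducible component Ω (the mutual-reachability class of a configuration x₀).  Since
any pattern count is at most L, summing k₁, k₂ over 0,…,L covers all of ℕ. -/
theorem stationary_distribution_on_component (L : ℕ) (hL : 6 ≤ L) [NeZero L]
    (α : ℝ) (hα0 : 0 < α) (hα1 : α < 1)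
    (Ω : Finset (ZMod L → ℤ)) (x₀ : ZMod L → ℤ) (hx₀ : IsBin L x₀)
    (hΩ : ∀ y, y ∈ Ω ↔ reach L x₀ y ∧ reach L y x₀)
    (Z : ℝ)
    (hZ : Z = ∑ k₁ ∈ Finset.range (L + 1), ∑ k₂ ∈ Finset.range (L + 1),
      α ^ k₂ / (1 - α) ^ (k₁ + k₂) *
        ((Ω.filter fun y =>
            patCount L y [1, 1, 1, 0] = k₁ ∧ patCount L y [0, 1, 0] = k₂).card : ℝ)) :
    (∑ x ∈ Ω, weight L α x / Z = 1) ∧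
      ∀ x ∈ Ω, ∑ x' ∈ Ω, transProb L α x' x * (weight L α x' / Z) = weight L α x / Z :=
  stationary_distribution_on_component_general L α hα0 hα1 Ω x₀ hx₀ hΩ Z hZ
end

section
/- Explicit form of the transition probability: for every real α, every configuration x, and every predecessor x' ∈ B(x), one has f_α(x',x) = α^{ℓ(x',x)} · (1−α)^{#1110(x') − ℓ(x',x)}, where ℓ(x',x) is the number of occurrences of the pattern 1110 in x' whose rightmost particle has moved, namely ℓ(x',x) = card{ j ∈ ZMod L : (x'_{j−3},x'_{j−2},x'_{j−1},x'_j) = (1,1,1,0) and x_{j−1} = 0 }. -/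
/-- The number of 1110-patterns of x' whose rightmost particle has moved in x. -/
def ell (L : ℕ) (x' x : ZMod L → ℤ) : ℕ :=
  ((Finset.range L).filter fun j =>
    x' (((j : ℕ) : ZMod L) - 3) = 1 ∧ x' (((j : ℕ) : ZMod L) - 2) = 1 ∧
      x' (((j : ℕ) : ZMod L) - 1) = 1 ∧ x' ((j : ℕ) : ZMod L) = 0 ∧
      x (((j : ℕ) : ZMod L) - 1) = 0).card

open Finset

lemma flux_z_one (w x y b : ℤ) : flux w x y 1 b = 0 := by
  simp [flux]

lemma flux_congr (w x y z b b' : ℤ) (h : w = 1 ∧ x = 1 ∧ y = 1 ∧ z = 0 → b = b') :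
    flux w x y z b = flux w x y z b' := by
  unfold flux
  split_ifs with h1 h2
  · exact h h1
  · rfl
  · rfl

lemma card_filter_cast (L : ℕ) [NeZero L] (P : ZMod L → Prop) [DecidablePred P] :
    ((Finset.range L).filter fun j => P ((j : ℕ) : ZMod L)).card
      = (Finset.univ.filter P).card := by
  apply Finset.card_bij (fun j _ => ((j : ℕ) : ZMod L))
  · intro a ha
    simp only [mem_filter, mem_range] at ha ⊢
    exact ⟨mem_univ _, ha.2⟩
  · intro a ha b hb hab
    simp only [mem_filter, mem_range] at ha hb
    rw [← ZMod.val_cast_of_lt ha.1, ← ZMod.val_cast_of_lt hb.1, hab]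
  · intro z hz
    refine ⟨z.val, ?_, ?_⟩
    · simp only [mem_filter, mem_range]
      refine ⟨ZMod.val_lt z, ?_⟩
      rw [ZMod.natCast_val, ZMod.cast_id]
      exact (mem_filter.mp hz).2
    · rw [ZMod.natCast_val, ZMod.cast_id]

lemma card_filter_sub (L : ℕ) [NeZero L] (P : ZMod L → Prop) [DecidablePred P] (c : ZMod L) :
    (Finset.univ.filter fun z => P (z - c)).card = (Finset.univ.filter P).card := by
  apply Finset.card_bij (fun z _ => z - c)
  · intro a ha
    simp only [mem_filter, mem_univ, true_and] at ha ⊢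
    exact ha
  · intro a _ b _ h
    exact sub_left_injective h
  · intro z hz
    refine ⟨z + c, ?_, by ring⟩
    simp only [mem_filter, mem_univ, true_and, add_sub_cancel_right]
    exact (mem_filter.mp hz).2

lemma upd_eq_iff (L : ℕ) [NeZero L] (x' x : ZMod L → ℤ) (hx' : inB L x' x) (b : ZMod L → ℤ) :
    upd L x' b = x ↔ ∀ j : ZMod L,
      (x' (j - 3) = 1 ∧ x' (j - 2) = 1 ∧ x' (j - 1) = 1 ∧ x' j = 0) → b j = 1 - x (j - 1) := by
  have key : ∀ (b : ZMod L → ℤ), upd L x' b = x → ∀ j : ZMod L,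
      (x' (j - 3) = 1 ∧ x' (j - 2) = 1 ∧ x' (j - 1) = 1 ∧ x' j = 0) →
        b j = 1 - x (j - 1) := by
    intro b hb j hj
    have h := congrFun hb (j - 1)
    simp only [upd] at h
    have e1 : j - 1 - 3 = j - 4 := by ring
    have e2 : j - 1 - 2 = j - 3 := by ring
    have e3 : j - 1 - 1 = j - 2 := by ring
    have e4 : j - 1 + 1 = j := by ring
    rw [e1, e2, e3, e4, hj.1, hj.2.1, hj.2.2.1, hj.2.2.2] at h
    simp only [flux_z_one] at h
    simp only [flux, and_true, true_and, one_ne_zero, and_false, if_true, if_false] at h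
    linarith
  constructor
  · exact fun h => key b h
  · intro hb
    obtain ⟨-, b₀, -, hb₀⟩ := hx'
    have hkey₀ := key b₀ hb₀
    funext k
    rw [← hb₀]
    simp only [upd]
    congr 1
    · congr 1
      apply flux_congr
      intro hpat
      rw [hb k hpat, hkey₀ k hpat]
    · apply flux_congr
      intro hpat
      have e1 : k + 1 - 3 = k - 2 := by ring
      have e2 : k + 1 - 2 = k - 1 := by ring
      have e3 : k + 1 - 1 = k := by ring
      have hpat' : x' (k + 1 - 3) = 1 ∧ x' (k + 1 - 2) = 1 ∧ x' (k + 1 - 1) = 1 ∧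
          x' (k + 1) = 0 := by
        rw [e1, e2, e3]; exact hpat
      rw [hb (k + 1) hpat', hkey₀ (k + 1) hpat']

/-- explicit form of the transition probability to a predecessor. -/
theorem transProb_explicit (L : ℕ) (hL : 6 ≤ L) [NeZero L] (α : ℝ)
    (x x' : ZMod L → ℤ) (hx : IsBin L x) (hx' : inB L x' x) :
    transProb L α x' x =
      α ^ ell L x' x * (1 - α) ^ (patCount L x' [1, 1, 1, 0] - ell L x' x) := by
  classical
  set p : ZMod L → Prop :=
    fun j => x' (j - 3) = 1 ∧ x' (j - 2) = 1 ∧ x' (j - 1) = 1 ∧ x' j = 0 with hp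
  set g : ZMod L → ℤ → ℝ := fun j a =>
    (α ^ a.toNat * (1 - α) ^ (1 - a).toNat) *
      (if (p j → a = 1 - x (j - 1)) then 1 else 0) with hg
  have step1 : transProb L α x' x = ∑ b ∈ cube L, ∏ j, g j (b j) := by
    unfold transProb
    refine Finset.sum_congr rfl fun b _ => ?_
    simp only [hg]
    conv_rhs => rw [Finset.prod_mul_distrib, Finset.prod_boole]
    congr 1
    have hiff : (upd L x' b = x) ↔ (∀ j : ZMod L, p j → b j = 1 - x (j - 1)) :=
      upd_eq_iff L x' x hx' b
    simp [hiff]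
  rw [step1]
  rw [show cube L = Fintype.piFinset fun _ : ZMod L => ({0, 1} : Finset ℤ) from rfl]
  rw [← Finset.prod_univ_sum]
  have step3 : ∀ j : ZMod L, (∑ a ∈ ({0, 1} : Finset ℤ), g j a)
      = if p j then (if x (j - 1) = 0 then α else 1 - α) else 1 := by
    intro j
    rw [Finset.sum_pair (by norm_num : (0 : ℤ) ≠ 1)]
    by_cases hj : p j
    · rcases hx (j - 1) with h0 | h1
      · simp [hg, eq_true hj, h0]
      · simp [hg, eq_true hj, h1]
    · simp [hg, eq_false hj]
  simp_rw [step3]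
  rw [← Finset.prod_filter, Finset.prod_ite, Finset.prod_const, Finset.prod_const]
  have hell : ((Finset.univ.filter p).filter fun j => x (j - 1) = 0).card = ell L x' x := by
    rw [Finset.filter_filter,
      ← card_filter_cast L (fun z => p z ∧ x (z - 1) = 0)]
    unfold ell
    congr 1
    apply Finset.filter_congr
    intro j _
    simp only [hp, and_assoc]
  have hS : (Finset.univ.filter p).card = patCount L x' [1, 1, 1, 0] := by
    have h1 : patCount L x' [1, 1, 1, 0]
        = (Finset.univ.filter fun z : ZMod L =>
            x' z = 1 ∧ x' (z + 1) = 1 ∧ x' (z + 2) = 1 ∧ x' (z + 3) = 0).card := by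
      rw [← card_filter_cast L
        (fun z => x' z = 1 ∧ x' (z + 1) = 1 ∧ x' (z + 2) = 1 ∧ x' (z + 3) = 0)]
      unfold patCount
      congr 1
      apply Finset.filter_congr
      intro j _
      constructor
      · intro h
        refine ⟨?_, ?_, ?_, ?_⟩
        · have := h 0 (by norm_num); push_cast at this; simpa using this
        · have := h 1 (by norm_num); push_cast at this; simpa using this
        · have := h 2 (by norm_num); push_cast at this; simpa using this
        · have := h 3 (by norm_num); push_cast at this; simpa using this
      · rintro ⟨h1, h2, h3, h4⟩ i hi
        have hi' : i < 4 := by simpa using hi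
        interval_cases i <;> push_cast <;> simp_all
    rw [h1, ← card_filter_sub L
      (fun z => x' z = 1 ∧ x' (z + 1) = 1 ∧ x' (z + 2) = 1 ∧ x' (z + 3) = 0) 3]
    congr 1
    apply Finset.filter_congr
    intro z _
    have e1 : z - 3 + 1 = z - 2 := by ring
    have e2 : z - 3 + 2 = z - 1 := by ring
    have e3 : z - 3 + 3 = z := by ring
    simp only [hp, e1, e2, e3]
  have hsplit := Finset.card_filter_add_card_filter_not
    (s := Finset.univ.filter p) (p := fun j => x (j - 1) = 0)
  have hneg : ((Finset.univ.filter p).filter fun j => ¬ x (j - 1) = 0).card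
      = patCount L x' [1, 1, 1, 0] - ell L x' x := by omega
  rw [hell, hneg]
end

section
/- Zero-noise limit of the mean flux: let L, m, h be integers with h ≥ 1, m ≥ 2h + 1 and L ≥ m + h. For α ∈ (0,1) define D(α) := ∑_{k₁,k₂ ∈ ℕ} (α^{k₂}/(1−α)^{k₁+k₂}) · 𝒩(k₁,k₂) and A(α) := ∑_{k₁,k₂ ∈ ℕ} (α·k₁ + k₂) · (α^{k₂}/(1−α)^{k₁+k₂}) · 𝒩(k₁,k₂). Then D(α) > 0 for every α ∈ (0,1), and lim_{α→1⁻} ( m/L − A(α)/(L·D(α)) ) = max( 2m/L − 1, 2h/L ) (all quantities regarded as real numbers). -/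
/-- The universal combinatorial factor built from L, m, h (with R(k₂) = m - 2h - k₂). -/
def calN (L m h k₁ k₂ : ℕ) : ℕ :=
  if 1 ≤ k₁ ∧ (k₁ : ℤ) ≤ (m : ℤ) - 2 * h - k₂ then
    Nat.choose (L - m - h) k₂ * Nat.choose h k₁ * Nat.choose (m - 2 * h - k₂ - 1) (k₁ - 1)
  else if k₁ = 0 ∧ (m : ℤ) - 2 * h - k₂ = 0 then Nat.choose (L - m - h) k₂
  else 0

namespace ZNL

/-- The maximal total degree `k₁ + k₂` on the support of `calN`. -/
def deg (L m h : ℕ) : ℕ := min (m - 2 * h) (L - m)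

lemma calN_support {L m h k₁ k₂ : ℕ} (hh : 1 ≤ h) (hm : 2 * h + 1 ≤ m) (hLmh : m + h ≤ L)
    (hne : calN L m h k₁ k₂ ≠ 0) : k₁ + k₂ ≤ deg L m h ∧ k₁ ≤ L ∧ k₂ ≤ L := by
  unfold calN at hne
  split_ifs at hne with h1 h2
  · obtain ⟨hk1, hk2⟩ := h1
    have hc2 : k₂ ≤ L - m - h := by
      by_contra hcon
      have : Nat.choose (L - m - h) k₂ = 0 := Nat.choose_eq_zero_of_lt (by omega)
      simp [this] at hne
    have hc1 : k₁ ≤ h := by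
      by_contra hcon
      have : Nat.choose h k₁ = 0 := Nat.choose_eq_zero_of_lt (by omega)
      simp [this] at hne
    unfold deg; omega
  · obtain ⟨hk1, hk2⟩ := h2
    have hc2 : k₂ ≤ L - m - h := by
      by_contra hcon
      have : Nat.choose (L - m - h) k₂ = 0 := Nat.choose_eq_zero_of_lt (by omega)
      simp [this] at hne
    unfold deg; omega
  · exact absurd rfl hne

lemma calN_witness {L m h : ℕ} (hh : 1 ≤ h) (hm : 2 * h + 1 ≤ m) (hLmh : m + h ≤ L) :
    ∃ a₁ a₂ : ℕ, a₁ ≤ L ∧ a₂ ≤ L ∧ a₁ + a₂ = deg L m h ∧ 0 < calN L m h a₁ a₂ := by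
  by_cases hc : L ≤ 2 * m - 2 * h
  · refine ⟨h, L - m - h, by omega, by omega, by unfold deg; omega, ?_⟩
    unfold calN
    rw [if_pos ⟨hh, by omega⟩]
    exact Nat.mul_pos (Nat.mul_pos (Nat.choose_pos le_rfl) (Nat.choose_pos le_rfl))
      (Nat.choose_pos (by omega))
  · by_cases hc2 : h ≤ m - 2 * h
    · refine ⟨h, m - 3 * h, by omega, by omega, by unfold deg; omega, ?_⟩
      unfold calN
      rw [if_pos ⟨hh, by omega⟩]
      exact Nat.mul_pos (Nat.mul_pos (Nat.choose_pos (by omega)) (Nat.choose_pos le_rfl))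
        (Nat.choose_pos (by omega))
    · refine ⟨m - 2 * h, 0, by omega, by omega, by unfold deg; omega, ?_⟩
      unfold calN
      rw [if_pos ⟨by omega, by omega⟩]
      exact Nat.mul_pos (Nat.mul_pos (Nat.choose_pos (by omega)) (Nat.choose_pos (by omega)))
        (Nat.choose_pos (by omega))

/-- The numerator polynomial of D after extracting `(1-α)^{-deg}`. -/
noncomputable def FF (L m h : ℕ) (α : ℝ) : ℝ :=
  ∑ k₁ ∈ Finset.range (L + 1), ∑ k₂ ∈ Finset.range (L + 1),
    α ^ k₂ * (1 - α) ^ (deg L m h - (k₁ + k₂)) * (calN L m h k₁ k₂ : ℝ)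

/-- The numerator polynomial of A after extracting `(1-α)^{-deg}`. -/
noncomputable def GG (L m h : ℕ) (α : ℝ) : ℝ :=
  ∑ k₁ ∈ Finset.range (L + 1), ∑ k₂ ∈ Finset.range (L + 1),
    (α * k₁ + k₂) * (α ^ k₂ * (1 - α) ^ (deg L m h - (k₁ + k₂)) * (calN L m h k₁ k₂ : ℝ))

lemma FF_pos {L m h : ℕ} (hh : 1 ≤ h) (hm : 2 * h + 1 ≤ m) (hLmh : m + h ≤ L)
    {α : ℝ} (h0 : 0 < α) (h1 : α ≤ 1) : 0 < FF L m h α := by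
  obtain ⟨a₁, a₂, ha₁, ha₂, hsum, hpos⟩ := calN_witness hh hm hLmh
  have hterm : ∀ k₁ k₂ : ℕ,
      0 ≤ α ^ k₂ * (1 - α) ^ (deg L m h - (k₁ + k₂)) * (calN L m h k₁ k₂ : ℝ) := fun k₁ k₂ =>
    mul_nonneg (mul_nonneg (pow_nonneg h0.le _) (pow_nonneg (by linarith) _)) (Nat.cast_nonneg _)
  unfold FF
  apply Finset.sum_pos'
  · exact fun i _ => Finset.sum_nonneg fun j _ => hterm i j
  · refine ⟨a₁, Finset.mem_range.mpr (by omega), ?_⟩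
    apply Finset.sum_pos'
    · exact fun j _ => hterm a₁ j
    · refine ⟨a₂, Finset.mem_range.mpr (by omega), ?_⟩
      have he : deg L m h - (a₁ + a₂) = 0 := by omega
      have hN : (0 : ℝ) < calN L m h a₁ a₂ := by exact_mod_cast hpos
      rw [he, pow_zero]
      exact mul_pos (mul_pos (pow_pos h0 _) one_pos) hN

lemma GG_one {L m h : ℕ} (hh : 1 ≤ h) (hm : 2 * h + 1 ≤ m) (hLmh : m + h ≤ L) :
    GG L m h 1 = (deg L m h : ℝ) * FF L m h 1 := by
  unfold GG FF
  rw [Finset.mul_sum]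
  refine Finset.sum_congr rfl fun k₁ _ => ?_
  rw [Finset.mul_sum]
  refine Finset.sum_congr rfl fun k₂ _ => ?_
  by_cases hN : calN L m h k₁ k₂ = 0
  · simp [hN]
  · have he : k₁ + k₂ ≤ deg L m h := (calN_support hh hm hLmh hN).1
    rcases eq_or_lt_of_le he with heq | hlt
    · have hz : deg L m h - (k₁ + k₂) = 0 := by omega
      have hcast : ((deg L m h : ℕ) : ℝ) = (k₁ : ℝ) + k₂ := by rw [← heq]; push_cast; ring
      rw [hz, pow_zero, hcast]; ring
    · have hz : ((1:ℝ) - 1) ^ (deg L m h - (k₁ + k₂)) = 0 := by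
        rw [show (1:ℝ) - 1 = 0 by ring, zero_pow (by omega)]
      rw [hz]; ring

lemma FF_cont (L m h : ℕ) : Continuous (FF L m h) := by
  unfold FF
  exact continuous_finset_sum _ fun i _ => continuous_finset_sum _ fun j _ => by fun_prop

lemma GG_cont (L m h : ℕ) : Continuous (GG L m h) := by
  unfold GG
  exact continuous_finset_sum _ fun i _ => continuous_finset_sum _ fun j _ => by fun_prop

lemma D_eq {L m h : ℕ} (hh : 1 ≤ h) (hm : 2 * h + 1 ≤ m) (hLmh : m + h ≤ L)
    {α : ℝ} (hα : α ≠ 1) :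
    (∑ k₁ ∈ Finset.range (L + 1), ∑ k₂ ∈ Finset.range (L + 1),
      α ^ k₂ / (1 - α) ^ (k₁ + k₂) * (calN L m h k₁ k₂ : ℝ))
    = FF L m h α / (1 - α) ^ (deg L m h) := by
  unfold FF
  rw [Finset.sum_div]
  refine Finset.sum_congr rfl fun k₁ _ => ?_
  rw [Finset.sum_div]
  refine Finset.sum_congr rfl fun k₂ _ => ?_
  by_cases hN : calN L m h k₁ k₂ = 0
  · simp [hN]
  · have he : k₁ + k₂ ≤ deg L m h := (calN_support hh hm hLmh hN).1
    have hc : (1:ℝ) - α ≠ 0 := sub_ne_zero.mpr (Ne.symm hα)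
    have hps : ((1:ℝ) - α) ^ (deg L m h)
        = (1 - α) ^ (k₁ + k₂) * (1 - α) ^ (deg L m h - (k₁ + k₂)) := by
      rw [← pow_add]; congr 1; omega
    rw [hps]
    field_simp

lemma A_eq {L m h : ℕ} (hh : 1 ≤ h) (hm : 2 * h + 1 ≤ m) (hLmh : m + h ≤ L)
    {α : ℝ} (hα : α ≠ 1) :
    (∑ k₁ ∈ Finset.range (L + 1), ∑ k₂ ∈ Finset.range (L + 1),
      (α * k₁ + k₂) * (α ^ k₂ / (1 - α) ^ (k₁ + k₂)) * (calN L m h k₁ k₂ : ℝ))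
    = GG L m h α / (1 - α) ^ (deg L m h) := by
  unfold GG
  rw [Finset.sum_div]
  refine Finset.sum_congr rfl fun k₁ _ => ?_
  rw [Finset.sum_div]
  refine Finset.sum_congr rfl fun k₂ _ => ?_
  by_cases hN : calN L m h k₁ k₂ = 0
  · simp [hN]
  · have he : k₁ + k₂ ≤ deg L m h := (calN_support hh hm hLmh hN).1
    have hc : (1:ℝ) - α ≠ 0 := sub_ne_zero.mpr (Ne.symm hα)
    have hps : ((1:ℝ) - α) ^ (deg L m h)
        = (1 - α) ^ (k₁ + k₂) * (1 - α) ^ (deg L m h - (k₁ + k₂)) := by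
      rw [← pow_add]; congr 1; omega
    rw [hps]
    field_simp

set_option linter.unnecessarySeqFocus false in
lemma key_val {L m h : ℕ} (hh : 1 ≤ h) (hm : 2 * h + 1 ≤ m) (hLmh : m + h ≤ L) :
    max (2 * (m : ℝ) / L - 1) (2 * (h : ℝ) / L)
      = (m : ℝ) / L - (deg L m h : ℝ) / L := by
  have hL : (0:ℝ) < L := by
    have : 0 < L := by omega
    exact_mod_cast this
  have hd : (deg L m h : ℝ) = min ((m : ℝ) - 2 * h) ((L : ℝ) - m) := by
    unfold deg
    rw [Nat.cast_min, Nat.cast_sub (by omega), Nat.cast_sub (by omega)]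
    push_cast; ring_nf
  have e1 : 2 * (m:ℝ) / L - 1 = (2 * m - L) / L := by field_simp
  rw [hd, e1, ← sub_div]
  rcases le_total ((m:ℝ) - 2 * h) ((L:ℝ) - m) with hmin | hmin
  · rw [min_eq_left hmin, max_eq_right (by gcongr <;> linarith)]
    congr 1; ring
  · rw [min_eq_right hmin, max_eq_left (by gcongr <;> linarith)]
    congr 1; ring

end ZNL

/-- positivity of the normalization D(α) on (0,1), and the zero-noise
(α → 1⁻) limit of the mean flux Q_u = m/L − A(α)/(L·D(α)).  Since the universal factor
calN vanishes whenever k₁ > L or k₂ > L, summing k₁, k₂ over 0,…,L covers all of ℕ. -/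
theorem zero_noise_limit (L m h : ℕ) (hh : 1 ≤ h) (hm : 2 * h + 1 ≤ m)
    (hLmh : m + h ≤ L) (D A : ℝ → ℝ)
    (hD : ∀ α : ℝ, D α = ∑ k₁ ∈ Finset.range (L + 1), ∑ k₂ ∈ Finset.range (L + 1),
      α ^ k₂ / (1 - α) ^ (k₁ + k₂) * (calN L m h k₁ k₂ : ℝ))
    (hA : ∀ α : ℝ, A α = ∑ k₁ ∈ Finset.range (L + 1), ∑ k₂ ∈ Finset.range (L + 1),
      (α * k₁ + k₂) * (α ^ k₂ / (1 - α) ^ (k₁ + k₂)) * (calN L m h k₁ k₂ : ℝ)) :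
    (∀ α : ℝ, 0 < α → α < 1 → 0 < D α) ∧
      Filter.Tendsto (fun α : ℝ => (m : ℝ) / L - A α / (L * D α))
        (nhdsWithin 1 (Set.Iio 1))
        (nhds (max (2 * (m : ℝ) / L - 1) (2 * (h : ℝ) / L))) := by
  have hF1 : 0 < ZNL.FF L m h 1 := ZNL.FF_pos hh hm hLmh one_pos le_rfl
  have hL : (0:ℝ) < L := by
    have : 0 < L := by omega
    exact_mod_cast this
  constructor
  · intro α h0 h1
    rw [hD α, ZNL.D_eq hh hm hLmh h1.ne]
    exact div_pos (ZNL.FF_pos hh hm hLmh h0 h1.le) (pow_pos (by linarith) _)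
  · have hne : (L:ℝ) * ZNL.FF L m h 1 ≠ 0 := (mul_pos hL hF1).ne'
    have hmain : Filter.Tendsto
        (fun α : ℝ => (m:ℝ)/L - ZNL.GG L m h α / (L * ZNL.FF L m h α))
        (nhds 1) (nhds ((m:ℝ)/L - ZNL.GG L m h 1 / (L * ZNL.FF L m h 1))) :=
      tendsto_const_nhds.sub (((ZNL.GG_cont L m h).tendsto 1).div
        ((continuous_const.mul (ZNL.FF_cont L m h)).tendsto 1) hne)
    have hval : (m:ℝ)/L - ZNL.GG L m h 1 / (L * ZNL.FF L m h 1)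
        = max (2 * (m : ℝ) / L - 1) (2 * (h : ℝ) / L) := by
      rw [ZNL.GG_one hh hm hLmh, ZNL.key_val hh hm hLmh]
      congr 1
      have hF1' := hF1.ne'
      field_simp
    rw [hval] at hmain
    have hmain' : Filter.Tendsto (fun α : ℝ => (m:ℝ)/L - ZNL.GG L m h α / (L * ZNL.FF L m h α))
        (nhdsWithin 1 (Set.Iio 1)) (nhds (max (2 * (m : ℝ) / L - 1) (2 * (h : ℝ) / L))) :=
      hmain.mono_left nhdsWithin_le_nhds
    refine Filter.Tendsto.congr' ?_ hmain'
    have hev : ∀ᶠ α in nhdsWithin (1:ℝ) (Set.Iio 1), 0 < α ∧ α < 1 := by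
      filter_upwards [eventually_nhdsWithin_of_eventually_nhds
        (eventually_gt_nhds one_pos), self_mem_nhdsWithin] with α hg hm'
      exact ⟨hg, hm'⟩
    filter_upwards [hev] with α hα
    obtain ⟨h0, h1⟩ := hα
    have hF : ZNL.FF L m h α ≠ 0 := (ZNL.FF_pos hh hm hLmh h0 h1.le).ne'
    have hc1 : (1:ℝ) - α ≠ 0 := sub_ne_zero.mpr (Ne.symm h1.ne)
    rw [hA α, hD α, ZNL.A_eq hh hm hLmh h1.ne, ZNL.D_eq hh hm hLmh h1.ne]
    congr 1
    field_simp
end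

section
/- Maximal total pattern number: let L, m, h be integers with h ≥ 1, m ≥ 2h + 1 and L ≥ m + h. Then the set { k₁ + k₂ : k₁, k₂ ∈ ℕ, 𝒩(k₁,k₂) ≠ 0 } is nonempty and its maximum equals min(L − m, m − 2h). -/
/-- the set of total pattern numbers k₁ + k₂ with nonvanishing universal
factor is nonempty and its maximum is min(L − m, m − 2h). -/
theorem max_total_pattern_number (L m h : ℕ) (hh : 1 ≤ h) (hm : 2 * h + 1 ≤ m)
    (hLmh : m + h ≤ L) :
    ({n : ℕ | ∃ k₁ k₂ : ℕ, calN L m h k₁ k₂ ≠ 0 ∧ n = k₁ + k₂}).Nonempty ∧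
      IsGreatest {n : ℕ | ∃ k₁ k₂ : ℕ, calN L m h k₁ k₂ ≠ 0 ∧ n = k₁ + k₂}
        (min (L - m) (m - 2 * h)) := by
  have hb1 : 1 ≤ m - 2 * h := by omega
  set M := min (L - m) (m - 2 * h) with hM
  have hM1 : 1 ≤ M := by omega
  have hMem : M ∈ {n : ℕ | ∃ k₁ k₂ : ℕ, calN L m h k₁ k₂ ≠ 0 ∧ n = k₁ + k₂} := by
    refine ⟨min h M, M - min h M, ?_, by omega⟩
    unfold calN
    rw [if_pos]
    · have h1 : 0 < Nat.choose (L - m - h) (M - min h M) :=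
        Nat.choose_pos (by omega)
      have h2 : 0 < Nat.choose h (min h M) := Nat.choose_pos (by omega)
      have h3 : 0 < Nat.choose (m - 2 * h - (M - min h M) - 1) (min h M - 1) :=
        Nat.choose_pos (by omega)
      exact Nat.ne_of_gt (Nat.mul_pos (Nat.mul_pos h1 h2) h3)
    · constructor
      · omega
      · push_cast; omega
  refine ⟨⟨M, hMem⟩, hMem, ?_⟩
  rintro n ⟨k₁, k₂, hne, rfl⟩
  unfold calN at hne
  split_ifs at hne with h1 h2
  · have c1 : Nat.choose (L - m - h) k₂ ≠ 0 := by
      intro hz; apply hne; rw [hz]; ring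
    have c2 : Nat.choose h k₁ ≠ 0 := by
      intro hz; apply hne; rw [hz]; ring
    have d1 : k₂ ≤ L - m - h := by
      by_contra hlt; exact c1 (Nat.choose_eq_zero_of_lt (by omega))
    have d2 : k₁ ≤ h := by
      by_contra hlt; exact c2 (Nat.choose_eq_zero_of_lt (by omega))
    have d3 : (k₁ : ℤ) ≤ (m : ℤ) - 2 * h - k₂ := h1.2
    have d4 : k₁ + k₂ ≤ m - 2 * h := by omega
    omega
  · have d1 : k₂ ≤ L - m - h := by
      by_contra hlt; exact hne (Nat.choose_eq_zero_of_lt (by omega))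
    have d3 : (m : ℤ) - 2 * h - k₂ = 0 := h2.2
    omega
  · exact absurd rfl hne
end

section
/- Cardinality of the predecessor set: for every configuration x : ZMod L → {0,1}, the number of one-step predecessors of x is card B(x) = 2^{ #110111(x) + #00111(x) + #010111(x) }. -/
set_option maxHeartbeats 10000000
set_option synthInstance.maxHeartbeats 2000000
set_option synthInstance.maxSize 5000


def bi (b : Bool) : ℤ := if b then 1 else 0
def fluxB (w x y z b : Bool) : Bool := (w && x && y && !z && b) || (!x && y && !z)
def addOk (a b c d : Bool) : Bool :=
  if c then ((a && b) == d) && (a || b) else ((a || b) == d) && !(a && b)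

theorem bi_bin (b : Bool) : bi b = 0 ∨ bi b = 1 := by cases b <;> simp [bi]
theorem bin_eq_bi {z : ℤ} (h : z = 0 ∨ z = 1) : z = bi (decide (z = 1)) := by
  rcases h with h | h <;> simp [h, bi]
theorem bi_flux : ∀ w x y z b : Bool,
    flux (bi w) (bi x) (bi y) (bi z) (bi b) = bi (fluxB w x y z b) := by decide
theorem addOk_iff : ∀ a b c d : Bool, (addOk a b c d = true ↔ bi a + bi b - bi c = bi d) := by decide
theorem addOk_xor : ∀ a b c d : Bool, addOk a b c d = true → d = Bool.xor a (Bool.xor b c) := by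
  decide
theorem decide_eq_bool {p : Prop} [inst : Decidable p] {b : Bool} (h : p ↔ b = true) :
    decide p = b := by cases b <;> simp_all
theorem bi_eq_zero {b : Bool} : bi b = 0 ↔ b = false := by cases b <;> simp [bi]
theorem bi_eq_one {b : Bool} : bi b = 1 ↔ b = true := by cases b <;> simp [bi]

def XB (L : ℕ) (x : ZMod L → ℤ) (p : ZMod L) : Bool := decide (x p = 1)
def singB (L : ℕ) (x : ZMod L → ℤ) (p : ZMod L) : Bool :=
  !XB L x (p - 1) && XB L x p && !XB L x (p + 1)
def chB (L : ℕ) (x : ZMod L → ℤ) (p : ZMod L) : Bool :=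
  !XB L x (p - 1) && XB L x p && XB L x (p + 1) && XB L x (p + 2)
def mB (L : ℕ) (x : ZMod L → ℤ) (T : Finset (ZMod L)) (p : ZMod L) : Bool :=
  singB L x p || decide (p ∈ T)
def fT (L : ℕ) (x : ZMod L → ℤ) (T : Finset (ZMod L)) (j : ZMod L) : ℤ :=
  bi (cond (mB L x T j) false (cond (mB L x T (j + 1)) true (XB L x j)))
def chSet (L : ℕ) [NeZero L] (x : ZMod L → ℤ) : Finset (ZMod L) :=
  Finset.univ.filter fun p => chB L x p = true

theorem XB_true {L x} {q : ZMod L} : XB L x q = true ↔ x q = 1 := by simp [XB]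
theorem XB_false {L x} (hx : IsBin L x) {q : ZMod L} : XB L x q = false ↔ x q = 0 := by
  rcases hx q with h | h <;> simp [XB, h]
theorem xeq_bi {L x} (hx : IsBin L x) (q : ZMod L) : x q = bi (XB L x q) :=
  bin_eq_bi (hx q)
theorem locSurj : ∀ (v4m v3m v2m v1m v0 v1 v2 v3 v4 b1m b0 b1 b2 b3 b4 : Bool),
    addOk v1m (fluxB v4m v3m v2m v1m b1m) (fluxB v3m v2m v1m v0 b0) (Bool.xor (v1m) (Bool.xor (fluxB v4m v3m v2m v1m b1m) (fluxB v3m v2m v1m v0 b0))) = true → addOk v0 (fluxB v3m v2m v1m v0 b0) (fluxB v2m v1m v0 v1 b1) (Bool.xor (v0) (Bool.xor (fluxB v3m v2m v1m v0 b0) (fluxB v2m v1m v0 v1 b1))) = true → addOk v1 (fluxB v2m v1m v0 v1 b1) (fluxB v1m v0 v1 v2 b2) (Bool.xor (v1) (Bool.xor (fluxB v2m v1m v0 v1 b1) (fluxB v1m v0 v1 v2 b2))) = true → addOk v2 (fluxB v1m v0 v1 v2 b2) (fluxB v0 v1 v2 v3 b3) (Bool.xor (v2) (Bool.xor (fluxB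 v1m v0 v1 v2 b2) (fluxB v0 v1 v2 v3 b3))) = true → addOk v3 (fluxB v0 v1 v2 v3 b3) (fluxB v1 v2 v3 v4 b4) (Bool.xor (v3) (Bool.xor (fluxB v0 v1 v2 v3 b3) (fluxB v1 v2 v3 v4 b4))) = true →
    v0 = cond ((!(Bool.xor (v1m) (Bool.xor (fluxB v4m v3m v2m v1m b1m) (fluxB v3m v2m v1m v0 b0))) && (Bool.xor (v0) (Bool.xor (fluxB v3m v2m v1m v0 b0) (fluxB v2m v1m v0 v1 b1))) && !(Bool.xor (v1) (Bool.xor (fluxB v2m v1m v0 v1 b1) (fluxB v1m v0 v1 v2 b2)))) || ((!(Bool.xor (v1m) (Bool.xor (fluxB v4m v3m v2m v1m b1m) (fluxB v3m v2m v1m v0 b0))) && (Bool.xor (v0) (Bool.xor (fluxB v3m v2m v1m v0 b0) (fluxB v2m v1m v0 v1 b1))) && (Bool.xor (v1) (Bool.xor (fluxB v2m v1m v0 v1 b1) (fluxB v1m v0 v1 v2 b2))) && (Bool.xor (v2) (Bool.xor (fluxB v1m v0 v1 v2 b2) (fluxB v0 v1 v2 v3 b3)))) && !v0)) false (cond ((!(Bool.xor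 (v0) (Bool.xor (fluxB v3m v2m v1m v0 b0) (fluxB v2m v1m v0 v1 b1))) && (Bool.xor (v1) (Bool.xor (fluxB v2m v1m v0 v1 b1) (fluxB v1m v0 v1 v2 b2))) && !(Bool.xor (v2) (Bool.xor (fluxB v1m v0 v1 v2 b2) (fluxB v0 v1 v2 v3 b3)))) || ((!(Bool.xor (v0) (Bool.xor (fluxB v3m v2m v1m v0 b0) (fluxB v2m v1m v0 v1 b1))) && (Bool.xor (v1) (Bool.xor (fluxB v2m v1m v0 v1 b1) (fluxB v1m v0 v1 v2 b2))) && (Bool.xor (v2) (Bool.xor (fluxB v1m v0 v1 v2 b2) (fluxB v0 v1 v2 v3 b3))) && (Bool.xor (v3) (Bool.xor (fluxB v0 v1 v2 v3 b3) (fluxB v1 v2 v3 v4 b4)))) && !v1)) true (Bool.xor (v0) (Bool.xor (fluxB v3m v2m v1m v0 b0) (fluxB v2m v1m v0 v1 b1)))) := by decide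

theorem locFwd : ∀ (x4m x3m x2m x1m x0 x1 x2 x3 x4 t3m t2m t1m t0 t1 t2 : Bool),
    (t3m = true → (!x4m && x3m && (!x2m || x1m)) = true) →
    ((!x4m && x3m && !x2m) = true → t3m = true) →
    (t2m = true → (!x3m && x2m && (!x1m || x0)) = true) →
    ((!x3m && x2m && !x1m) = true → t2m = true) →
    (t1m = true → (!x2m && x1m && (!x0 || x1)) = true) →
    ((!x2m && x1m && !x0) = true → t1m = true) →
    (t0 = true → (!x1m && x0 && (!x1 || x2)) = true) →
    ((!x1m && x0 && !x1) = true → t0 = true) →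
    (t1 = true → (!x0 && x1 && (!x2 || x3)) = true) →
    ((!x0 && x1 && !x2) = true → t1 = true) →
    (t2 = true → (!x1 && x2 && (!x3 || x4)) = true) →
    ((!x1 && x2 && !x3) = true → t2 = true) →
    addOk (cond t0 false (cond t1 true x0)) (fluxB (cond t3m false (cond t2m true x3m)) (cond t2m false (cond t1m true x2m)) (cond t1m false (cond t0 true x1m)) (cond t0 false (cond t1 true x0)) t0) (fluxB (cond t2m false (cond t1m true x2m)) (cond t1m false (cond t0 true x1m)) (cond t0 false (cond t1 true x0)) (cond t1 false (cond t2 true x1)) t1) x0 = true := by decide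

theorem mB_prop {L : ℕ} [NeZero L] {x : ZMod L → ℤ} (hx : IsBin L x)
    {T : Finset (ZMod L)} (hT : T ⊆ chSet L x) (p : ZMod L) :
    mB L x T p = true →
      (!XB L x (p - 1) && XB L x p && (!XB L x (p + 1) || XB L x (p + 2))) = true := by
  intro h
  rw [mB, Bool.or_eq_true] at h
  rcases h with h | h
  · rw [singB] at h
    simp only [Bool.and_eq_true, Bool.or_eq_true] at h ⊢
    tauto
  · have hm : p ∈ chSet L x := hT (by simpa using h)
    rw [chSet, Finset.mem_filter, chB] at hm
    have hc := hm.2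
    simp only [Bool.and_eq_true, Bool.or_eq_true] at hc ⊢
    tauto

theorem mB_sing {L : ℕ} {x : ZMod L → ℤ} {T : Finset (ZMod L)} {p : ZMod L}
    (h : (!XB L x (p - 1) && XB L x p && !XB L x (p + 1)) = true) :
    mB L x T p = true := by
  rw [mB, singB]
  simp [h]

theorem fwd_inB {L : ℕ} [NeZero L] {x : ZMod L → ℤ} (hx : IsBin L x)
    {T : Finset (ZMod L)} (hT : T ⊆ chSet L x) :
    IsBin L (fT L x T) ∧ ∃ b : ZMod L → ℤ, IsBin L b ∧ upd L (fT L x T) b = x := by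
  refine ⟨fun j => bi_bin _, fun j => bi (mB L x T j), fun j => bi_bin _, ?_⟩
  funext j
  have e1 : j - 3 + 1 = j - 2 := by ring
  have e2 : j - 2 + 1 = j - 1 := by ring
  have e3 : j - 1 + 1 = j := by ring
  have e4 : j + 1 + 1 = j + 2 := by ring
  have e5 : j - 3 - 1 = j - 4 := by ring
  have e6 : j - 3 + 2 = j - 1 := by ring
  have e7 : j - 2 - 1 = j - 3 := by ring
  have e8 : j - 2 + 2 = j := by ring
  have e9 : j - 1 - 1 = j - 2 := by ring
  have e10 : j - 1 + 2 = j + 1 := by ring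
  have e11 : j + 1 - 1 = j := by ring
  have e12 : j + 1 + 2 = j + 3 := by ring
  have e13 : j + 2 - 1 = j + 1 := by ring
  have e14 : j + 2 + 1 = j + 3 := by ring
  have e15 : j + 2 + 2 = j + 4 := by ring
  have h1 := mB_prop hx hT (j - 3)
  have h2 := mB_prop hx hT (j - 2)
  have h3 := mB_prop hx hT (j - 1)
  have h4 := mB_prop hx hT j
  have h5 := mB_prop hx hT (j + 1)
  have h6 := mB_prop hx hT (j + 2)
  have s1 : (!XB L x (j - 3 - 1) && XB L x (j - 3) && !XB L x (j - 3 + 1)) = true →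
      mB L x T (j - 3) = true := mB_sing
  have s2 : (!XB L x (j - 2 - 1) && XB L x (j - 2) && !XB L x (j - 2 + 1)) = true →
      mB L x T (j - 2) = true := mB_sing
  have s3 : (!XB L x (j - 1 - 1) && XB L x (j - 1) && !XB L x (j - 1 + 1)) = true →
      mB L x T (j - 1) = true := mB_sing
  have s4 : (!XB L x (j - 1) && XB L x j && !XB L x (j + 1)) = true →
      mB L x T j = true := mB_sing
  have s5 : (!XB L x (j + 1 - 1) && XB L x (j + 1) && !XB L x (j + 1 + 1)) = true →
      mB L x T (j + 1) = true := mB_sing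
  have s6 : (!XB L x (j + 2 - 1) && XB L x (j + 2) && !XB L x (j + 2 + 1)) = true →
      mB L x T (j + 2) = true := mB_sing
  simp only [e1, e2, e3, e4, e5, e6, e7, e8, e9, e10, e11, e12, e13, e14, e15]
    at h1 h2 h3 h4 h5 h6 s1 s2 s3 s4 s5 s6
  show upd L (fT L x T) (fun k => bi (mB L x T k)) j = x j
  simp only [upd, fT]
  simp only [e1, e2, e3, e4]
  rw [bi_flux, bi_flux, xeq_bi hx j]
  exact (addOk_iff _ _ _ _).mp
    (locFwd (XB L x (j - 4)) (XB L x (j - 3)) (XB L x (j - 2)) (XB L x (j - 1)) (XB L x j)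
      (XB L x (j + 1)) (XB L x (j + 2)) (XB L x (j + 3)) (XB L x (j + 4))
      (mB L x T (j - 3)) (mB L x T (j - 2)) (mB L x T (j - 1)) (mB L x T j)
      (mB L x T (j + 1)) (mB L x T (j + 2)) h1 s1 h2 s2 h3 s3 h4 s4 h5 s5 h6 s6)

theorem surj_pointwise {L : ℕ} (V B X : ZMod L → Bool)
    (key : ∀ p : ZMod L, addOk (V p)
      (fluxB (V (p - 3)) (V (p - 2)) (V (p - 1)) (V p) (B p))
      (fluxB (V (p - 2)) (V (p - 1)) (V p) (V (p + 1)) (B (p + 1))) (X p) = true)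
    (j : ZMod L) :
    V j = cond ((!X (j - 1) && X j && !X (j + 1)) ||
        ((!X (j - 1) && X j && X (j + 1) && X (j + 2)) && !V j)) false
      (cond ((!X j && X (j + 1) && !X (j + 2)) ||
        ((!X j && X (j + 1) && X (j + 2) && X (j + 3)) && !V (j + 1))) true (X j)) := by
  have e1 : j - 1 - 3 = j - 4 := by ring
  have e2 : j - 1 - 2 = j - 3 := by ring
  have e3 : j - 1 - 1 = j - 2 := by ring
  have e4 : j - 1 + 1 = j := by ring
  have e5 : j + 1 - 3 = j - 2 := by ring
  have e6 : j + 1 - 2 = j - 1 := by ring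
  have e7 : j + 1 - 1 = j := by ring
  have e8 : j + 1 + 1 = j + 2 := by ring
  have e9 : j + 2 - 3 = j - 1 := by ring
  have e10 : j + 2 - 2 = j := by ring
  have e11 : j + 2 - 1 = j + 1 := by ring
  have e12 : j + 2 + 1 = j + 3 := by ring
  have e13 : j + 3 - 3 = j := by ring
  have e14 : j + 3 - 2 = j + 1 := by ring
  have e15 : j + 3 - 1 = j + 2 := by ring
  have e16 : j + 3 + 1 = j + 4 := by ring
  have kx := fun p => addOk_xor _ _ _ _ (key p)
  have k1 := key (j - 1)
  have k2 := key j
  have k3 := key (j + 1)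
  have k4 := key (j + 2)
  have k5 := key (j + 3)
  rw [kx (j - 1)] at k1
  rw [kx j] at k2
  rw [kx (j + 1)] at k3
  rw [kx (j + 2)] at k4
  rw [kx (j + 3)] at k5
  rw [kx (j - 1), kx j, kx (j + 1), kx (j + 2), kx (j + 3)]
  simp only [e1, e2, e3, e4, e5, e6, e7, e8, e9, e10, e11, e12, e13, e14, e15, e16]
    at k1 k2 k3 k4 k5 ⊢
  exact locSurj (V (j - 4)) (V (j - 3)) (V (j - 2)) (V (j - 1)) (V j) (V (j + 1)) (V (j + 2))
    (V (j + 3)) (V (j + 4)) (B (j - 1)) (B j) (B (j + 1)) (B (j + 2)) (B (j + 3)) (B (j + 4))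
    k1 k2 k3 k4 k5

theorem surj_fT {L : ℕ} [NeZero L] {x v : ZMod L → ℤ} (hx : IsBin L x) (hv : IsBin L v)
    {b : ZMod L → ℤ} (hb : IsBin L b) (hub : upd L v b = x) :
    v = fT L x ((chSet L x).filter fun p => v p = 0) := by
  have key : ∀ p : ZMod L, addOk (XB L v p)
      (fluxB (XB L v (p - 3)) (XB L v (p - 2)) (XB L v (p - 1)) (XB L v p) (XB L b p))
      (fluxB (XB L v (p - 2)) (XB L v (p - 1)) (XB L v p) (XB L v (p + 1)) (XB L b (p + 1)))
      (XB L x p) = true := by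
    intro p
    apply (addOk_iff _ _ _ _).mpr
    have h := congrFun hub p
    simp only [upd] at h
    rw [xeq_bi hv p, xeq_bi hv (p - 3), xeq_bi hv (p - 2), xeq_bi hv (p - 1),
      xeq_bi hv (p + 1), xeq_bi hb p, xeq_bi hb (p + 1), xeq_bi hx p] at h
    rw [bi_flux, bi_flux] at h
    exact h
  have memT : ∀ p : ZMod L, decide (p ∈ (chSet L x).filter fun q => v q = 0) =
      (chB L x p && !XB L v p) := by
    intro p
    apply decide_eq_bool
    rw [Finset.mem_filter, chSet, Finset.mem_filter]
    have hv0 : v p = 0 ↔ XB L v p = false := (XB_false hv).symm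
    simp only [Finset.mem_univ, true_and, Bool.and_eq_true, Bool.not_eq_true']
    tauto
  funext j
  have e4 : j + 1 + 1 = j + 2 := by ring
  have e7 : j + 1 - 1 = j := by ring
  have e8 : j + 1 + 2 = j + 3 := by ring
  rw [xeq_bi hv j, fT]
  apply congrArg bi
  simp only [mB, singB, chB, memT]
  simp only [e4, e7, e8]
  exact surj_pointwise (XB L v) (XB L b) (XB L x) key j

theorem mem_fT_zero {L : ℕ} [NeZero L] {x : ZMod L → ℤ} {T : Finset (ZMod L)}
    (hT : T ⊆ chSet L x) {p : ZMod L} (hp : p ∈ chSet L x) :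
    p ∈ T ↔ fT L x T p = 0 := by
  have hch : chB L x p = true := (Finset.mem_filter.mp hp).2
  simp only [chB, Bool.and_eq_true] at hch
  have hXp : XB L x p = true := hch.1.1.2
  have hXp1 : XB L x (p + 1) = true := hch.1.2
  have hsing : singB L x p = false := by simp [singB, hXp1]
  have hmp1 : mB L x T (p + 1) = false := by
    rw [mB]
    have hs : singB L x (p + 1) = false := by
      rw [singB, show p + 1 - 1 = p from by ring, hXp]; simp
    have hd : decide (p + 1 ∈ T) = false := by
      simp only [decide_eq_false_iff_not]
      intro hmem
      have hc : chB L x (p + 1) = true := (Finset.mem_filter.mp (hT hmem)).2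
      rw [chB, show p + 1 - 1 = p from by ring, hXp] at hc
      simp at hc
    rw [hs, hd]
    rfl
  constructor
  · intro hmem
    have hm : mB L x T p = true := by rw [mB, hsing]; simp [hmem]
    rw [fT, hm]
    rfl
  · intro h0
    by_contra hmem
    have hm : mB L x T p = false := by
      rw [mB, hsing]
      simp [hmem]
    rw [fT, hm, hmp1] at h0
    rw [bi_eq_zero] at h0
    simp only [Bool.cond_false] at h0
    rw [h0] at hXp
    exact Bool.false_ne_true hXp

theorem card_B_pre {L : ℕ} [NeZero L] {x : ZMod L → ℤ} (hx : IsBin L x) :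
    ({v : ZMod L → ℤ | inB L v x}).ncard = 2 ^ (chSet L x).card := by
  have hEq : {v : ZMod L → ℤ | inB L v x} = fT L x '' {T : Finset (ZMod L) | T ⊆ chSet L x} := by
    ext v
    constructor
    · rintro ⟨hv, b, hb, hub⟩
      exact ⟨(chSet L x).filter fun p => v p = 0, Finset.filter_subset _ _,
        (surj_fT hx hv hb hub).symm⟩
    · rintro ⟨T, hT, rfl⟩
      exact fwd_inB hx hT
  rw [hEq]
  have hinj : Set.InjOn (fT L x) {T : Finset (ZMod L) | T ⊆ chSet L x} := by
    intro T1 h1 T2 h2 h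
    apply Finset.ext
    intro p
    constructor
    · intro hp
      exact (mem_fT_zero h2 (h1 hp)).mpr (by rw [← h]; exact (mem_fT_zero h1 (h1 hp)).mp hp)
    · intro hp
      exact (mem_fT_zero h1 (h2 hp)).mpr (by rw [h]; exact (mem_fT_zero h2 (h2 hp)).mp hp)
  rw [Set.ncard_image_of_injOn hinj]
  have hpw : {T : Finset (ZMod L) | T ⊆ chSet L x} = ↑(chSet L x).powerset := by
    ext T; simp [Finset.mem_powerset]
  rw [hpw, Set.ncard_coe_finset, Finset.card_powerset]

theorem range_card {L : ℕ} [NeZero L] (P : ZMod L → Prop) [DecidablePred P] :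
    ((Finset.range L).filter fun j => P ((j : ℕ) : ZMod L)).card =
      (Finset.univ.filter fun p => P p).card := by
  apply Finset.card_bij (fun j _ => ((j : ℕ) : ZMod L))
  · intro a ha
    simp only [Finset.mem_filter, Finset.mem_univ, true_and]
    exact (Finset.mem_filter.mp ha).2
  · intro a ha b hb hab
    have ha' := Finset.mem_range.mp (Finset.mem_filter.mp ha).1
    have hb' := Finset.mem_range.mp (Finset.mem_filter.mp hb).1
    have := congrArg ZMod.val hab
    rwa [ZMod.val_cast_of_lt ha', ZMod.val_cast_of_lt hb'] at this
  · intro p hp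
    refine ⟨p.val, Finset.mem_filter.mpr ⟨Finset.mem_range.mpr (ZMod.val_lt p), ?_⟩,
      ZMod.natCast_rightInverse p⟩
    rw [ZMod.natCast_rightInverse p]
    exact (Finset.mem_filter.mp hp).2

theorem patA_eq {L : ℕ} [NeZero L] (x : ZMod L → ℤ) :
    patCount L x [1, 1, 0, 1, 1, 1] =
      (Finset.univ.filter fun p : ZMod L =>
        x p = 1 ∧ x (p + 1) = 1 ∧ x (p + 2) = 0 ∧ x (p + 3) = 1 ∧ x (p + 4) = 1 ∧
          x (p + 5) = 1).card := by
  have hfe : ((Finset.range L).filter fun j =>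
        ∀ i < ([1, 1, 0, 1, 1, 1] : List ℤ).length,
          x ((j + i : ℕ) : ZMod L) = ([1, 1, 0, 1, 1, 1] : List ℤ).getD i 0) =
      ((Finset.range L).filter fun j => (fun p : ZMod L =>
        x p = 1 ∧ x (p + 1) = 1 ∧ x (p + 2) = 0 ∧ x (p + 3) = 1 ∧ x (p + 4) = 1 ∧
          x (p + 5) = 1) ((j : ℕ) : ZMod L)) := by
    apply Finset.ext
    intro j
    simp only [Finset.mem_filter]
    refine and_congr_right fun _ => ?_
    constructor
    · intro h
      refine ⟨?_, ?_, ?_, ?_, ?_, ?_⟩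
      · have := h 0 (by norm_num); push_cast at this; simpa using this
      · have := h 1 (by norm_num); push_cast at this; simpa using this
      · have := h 2 (by norm_num); push_cast at this; simpa using this
      · have := h 3 (by norm_num); push_cast at this; simpa using this
      · have := h 4 (by norm_num); push_cast at this; simpa using this
      · have := h 5 (by norm_num); push_cast at this; simpa using this
    · rintro ⟨h0, h1, h2, h3, h4, h5⟩ i hi
      have hi6 : i < 6 := by simpa using hi
      interval_cases i <;> push_cast <;> simpa using ‹_›
  rw [patCount, hfe]
  exact range_card (fun p : ZMod L =>
    x p = 1 ∧ x (p + 1) = 1 ∧ x (p + 2) = 0 ∧ x (p + 3) = 1 ∧ x (p + 4) = 1 ∧ x (p + 5) = 1)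

theorem patB_eq {L : ℕ} [NeZero L] (x : ZMod L → ℤ) :
    patCount L x [0, 0, 1, 1, 1] =
      (Finset.univ.filter fun p : ZMod L => x p = 0 ∧ x (p + 1) = 0 ∧ x (p + 2) = 1 ∧ x (p + 3) = 1 ∧ x (p + 4) = 1).card := by
  have hfe : ((Finset.range L).filter fun j =>
        ∀ i < ([0, 0, 1, 1, 1] : List ℤ).length,
          x ((j + i : ℕ) : ZMod L) = ([0, 0, 1, 1, 1] : List ℤ).getD i 0) =
      ((Finset.range L).filter fun j => (fun p : ZMod L =>
        x p = 0 ∧ x (p + 1) = 0 ∧ x (p + 2) = 1 ∧ x (p + 3) = 1 ∧ x (p + 4) = 1) ((j : ℕ) : ZMod L)) := by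
    apply Finset.ext
    intro j
    simp only [Finset.mem_filter]
    refine and_congr_right fun _ => ?_
    constructor
    · intro h
      refine ⟨?_, ?_, ?_, ?_, ?_⟩
      · have := h 0 (by norm_num); push_cast at this; simpa using this
      · have := h 1 (by norm_num); push_cast at this; simpa using this
      · have := h 2 (by norm_num); push_cast at this; simpa using this
      · have := h 3 (by norm_num); push_cast at this; simpa using this
      · have := h 4 (by norm_num); push_cast at this; simpa using this
    · rintro ⟨h0, h1, h2, h3, h4⟩ i hi
      have hi' : i < 5 := by simpa using hi
      interval_cases i <;> push_cast <;> simpa using ‹_›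
  rw [patCount, hfe]
  exact range_card (fun p : ZMod L => x p = 0 ∧ x (p + 1) = 0 ∧ x (p + 2) = 1 ∧ x (p + 3) = 1 ∧ x (p + 4) = 1)

theorem patC_eq {L : ℕ} [NeZero L] (x : ZMod L → ℤ) :
    patCount L x [0, 1, 0, 1, 1, 1] =
      (Finset.univ.filter fun p : ZMod L => x p = 0 ∧ x (p + 1) = 1 ∧ x (p + 2) = 0 ∧ x (p + 3) = 1 ∧ x (p + 4) = 1 ∧ x (p + 5) = 1).card := by
  have hfe : ((Finset.range L).filter fun j =>
        ∀ i < ([0, 1, 0, 1, 1, 1] : List ℤ).length,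
          x ((j + i : ℕ) : ZMod L) = ([0, 1, 0, 1, 1, 1] : List ℤ).getD i 0) =
      ((Finset.range L).filter fun j => (fun p : ZMod L =>
        x p = 0 ∧ x (p + 1) = 1 ∧ x (p + 2) = 0 ∧ x (p + 3) = 1 ∧ x (p + 4) = 1 ∧ x (p + 5) = 1) ((j : ℕ) : ZMod L)) := by
    apply Finset.ext
    intro j
    simp only [Finset.mem_filter]
    refine and_congr_right fun _ => ?_
    constructor
    · intro h
      refine ⟨?_, ?_, ?_, ?_, ?_, ?_⟩
      · have := h 0 (by norm_num); push_cast at this; simpa using this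
      · have := h 1 (by norm_num); push_cast at this; simpa using this
      · have := h 2 (by norm_num); push_cast at this; simpa using this
      · have := h 3 (by norm_num); push_cast at this; simpa using this
      · have := h 4 (by norm_num); push_cast at this; simpa using this
      · have := h 5 (by norm_num); push_cast at this; simpa using this
    · rintro ⟨h0, h1, h2, h3, h4, h5⟩ i hi
      have hi' : i < 6 := by simpa using hi
      interval_cases i <;> push_cast <;> simpa using ‹_›
  rw [patCount, hfe]
  exact range_card (fun p : ZMod L => x p = 0 ∧ x (p + 1) = 1 ∧ x (p + 2) = 0 ∧ x (p + 3) = 1 ∧ x (p + 4) = 1 ∧ x (p + 5) = 1)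

theorem cardA {L : ℕ} [NeZero L] (x : ZMod L → ℤ) :
    (Finset.univ.filter fun p : ZMod L => (x (p - 1) = 0 ∧ x p = 1 ∧ x (p + 1) = 1 ∧ x (p + 2) = 1) ∧ x (p - 3) = 1 ∧ x (p - 2) = 1).card = (Finset.univ.filter fun p : ZMod L => x p = 1 ∧ x (p + 1) = 1 ∧ x (p + 2) = 0 ∧ x (p + 3) = 1 ∧ x (p + 4) = 1 ∧ x (p + 5) = 1).card := by
  apply Finset.card_bij (fun p _ => p - 3)
  · intro p hp
    obtain ⟨⟨hc1, hc2, hc3, hc4⟩, h5, h6⟩ := (Finset.mem_filter.mp hp).2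
    simp only [Finset.mem_filter, Finset.mem_univ, true_and]
    refine ⟨?_, ?_, ?_, ?_, ?_, ?_⟩
    · exact h5
    · rw [show p - 3 + 1 = p - 2 from by ring]; exact h6
    · rw [show p - 3 + 2 = p - 1 from by ring]; exact hc1
    · rw [show p - 3 + 3 = p from by ring]; exact hc2
    · rw [show p - 3 + 4 = p + 1 from by ring]; exact hc3
    · rw [show p - 3 + 5 = p + 2 from by ring]; exact hc4
  · intro a _ b _ hab
    exact sub_left_inj.mp hab
  · intro q hq
    obtain ⟨h0, h1, h2, h3, h4, h5⟩ := (Finset.mem_filter.mp hq).2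
    refine ⟨q + 3, ?_, by ring⟩
    simp only [Finset.mem_filter, Finset.mem_univ, true_and]
    refine ⟨⟨?_, ?_, ?_, ?_⟩, ?_, ?_⟩
    · rw [show q + 3 - 1 = q + 2 from by ring]; exact h2
    · exact h3
    · rw [show q + 3 + 1 = q + 4 from by ring]; exact h4
    · rw [show q + 3 + 2 = q + 5 from by ring]; exact h5
    · rw [show q + 3 - 3 = q from by ring]; exact h0
    · rw [show q + 3 - 2 = q + 1 from by ring]; exact h1

theorem cardB {L : ℕ} [NeZero L] (x : ZMod L → ℤ) :
    (Finset.univ.filter fun p : ZMod L => (x (p - 1) = 0 ∧ x p = 1 ∧ x (p + 1) = 1 ∧ x (p + 2) = 1) ∧ x (p - 2) = 0).card = (Finset.univ.filter fun p : ZMod L => x p = 0 ∧ x (p + 1) = 0 ∧ x (p + 2) = 1 ∧ x (p + 3) = 1 ∧ x (p + 4) = 1).card := by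
  apply Finset.card_bij (fun p _ => p - 2)
  · intro p hp
    obtain ⟨⟨hc1, hc2, hc3, hc4⟩, h5⟩ := (Finset.mem_filter.mp hp).2
    simp only [Finset.mem_filter, Finset.mem_univ, true_and]
    refine ⟨?_, ?_, ?_, ?_, ?_⟩
    · exact h5
    · rw [show p - 2 + 1 = p - 1 from by ring]; exact hc1
    · rw [show p - 2 + 2 = p from by ring]; exact hc2
    · rw [show p - 2 + 3 = p + 1 from by ring]; exact hc3
    · rw [show p - 2 + 4 = p + 2 from by ring]; exact hc4
  · intro a _ b _ hab
    exact sub_left_inj.mp hab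
  · intro q hq
    obtain ⟨h0, h1, h2, h3, h4⟩ := (Finset.mem_filter.mp hq).2
    refine ⟨q + 2, ?_, by ring⟩
    simp only [Finset.mem_filter, Finset.mem_univ, true_and]
    refine ⟨⟨?_, ?_, ?_, ?_⟩, ?_⟩
    · rw [show q + 2 - 1 = q + 1 from by ring]; exact h1
    · exact h2
    · rw [show q + 2 + 1 = q + 3 from by ring]; exact h3
    · rw [show q + 2 + 2 = q + 4 from by ring]; exact h4
    · rw [show q + 2 - 2 = q from by ring]; exact h0

theorem cardC {L : ℕ} [NeZero L] (x : ZMod L → ℤ) :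
    (Finset.univ.filter fun p : ZMod L => (x (p - 1) = 0 ∧ x p = 1 ∧ x (p + 1) = 1 ∧ x (p + 2) = 1) ∧ x (p - 3) = 0 ∧ x (p - 2) = 1).card = (Finset.univ.filter fun p : ZMod L => x p = 0 ∧ x (p + 1) = 1 ∧ x (p + 2) = 0 ∧ x (p + 3) = 1 ∧ x (p + 4) = 1 ∧ x (p + 5) = 1).card := by
  apply Finset.card_bij (fun p _ => p - 3)
  · intro p hp
    obtain ⟨⟨hc1, hc2, hc3, hc4⟩, h5, h6⟩ := (Finset.mem_filter.mp hp).2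
    simp only [Finset.mem_filter, Finset.mem_univ, true_and]
    refine ⟨?_, ?_, ?_, ?_, ?_, ?_⟩
    · exact h5
    · rw [show p - 3 + 1 = p - 2 from by ring]; exact h6
    · rw [show p - 3 + 2 = p - 1 from by ring]; exact hc1
    · rw [show p - 3 + 3 = p from by ring]; exact hc2
    · rw [show p - 3 + 4 = p + 1 from by ring]; exact hc3
    · rw [show p - 3 + 5 = p + 2 from by ring]; exact hc4
  · intro a _ b _ hab
    exact sub_left_inj.mp hab
  · intro q hq
    obtain ⟨h0, h1, h2, h3, h4, h5⟩ := (Finset.mem_filter.mp hq).2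
    refine ⟨q + 3, ?_, by ring⟩
    simp only [Finset.mem_filter, Finset.mem_univ, true_and]
    refine ⟨⟨?_, ?_, ?_, ?_⟩, ?_, ?_⟩
    · rw [show q + 3 - 1 = q + 2 from by ring]; exact h2
    · exact h3
    · rw [show q + 3 + 1 = q + 4 from by ring]; exact h4
    · rw [show q + 3 + 2 = q + 5 from by ring]; exact h5
    · rw [show q + 3 - 3 = q from by ring]; exact h0
    · rw [show q + 3 - 2 = q + 1 from by ring]; exact h1

theorem chSet_card {L : ℕ} [NeZero L] {x : ZMod L → ℤ} (hx : IsBin L x) :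
    (chSet L x).card =
      patCount L x [1, 1, 0, 1, 1, 1] + patCount L x [0, 0, 1, 1, 1] +
        patCount L x [0, 1, 0, 1, 1, 1] := by
  rw [patA_eq x, patB_eq x, patC_eq x]
  have hch : chSet L x = (Finset.univ.filter fun p : ZMod L => x (p - 1) = 0 ∧ x p = 1 ∧ x (p + 1) = 1 ∧ x (p + 2) = 1) := by
    apply Finset.ext
    intro p
    simp only [chSet, Finset.mem_filter, Finset.mem_univ, true_and]
    rw [chB]
    simp only [Bool.and_eq_true, Bool.not_eq_true', XB_true, XB_false hx]
    tauto
  have hU : (Finset.univ.filter fun p : ZMod L => x (p - 1) = 0 ∧ x p = 1 ∧ x (p + 1) = 1 ∧ x (p + 2) = 1) = (Finset.univ.filter fun p : ZMod L => (x (p - 1) = 0 ∧ x p = 1 ∧ x (p + 1) = 1 ∧ x (p + 2) = 1) ∧ x (p - 3) = 1 ∧ x (p - 2) = 1) ∪ (Finset.univ.filter fun p : ZMod L => (x (p - 1) = 0 ∧ x p = 1 ∧ x (p + 1) = 1 ∧ x (p + 2) = 1) ∧ x (p - 2) = 0) ∪ (Finset.univ.filter fun p : ZMod L => (x (p - 1)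 = 0 ∧ x p = 1 ∧ x (p + 1) = 1 ∧ x (p + 2) = 1) ∧ x (p - 3) = 0 ∧ x (p - 2) = 1) := by
    apply Finset.ext
    intro p
    simp only [Finset.mem_union, Finset.mem_filter, Finset.mem_univ, true_and]
    constructor
    · intro h
      rcases hx (p - 2) with h2 | h2
      · exact Or.inl (Or.inr ⟨h, h2⟩)
      · rcases hx (p - 3) with h3 | h3
        · exact Or.inr ⟨h, h3, h2⟩
        · exact Or.inl (Or.inl ⟨h, h3, h2⟩)
    · rintro ((⟨h, _⟩ | ⟨h, _⟩) | ⟨h, _⟩) <;> exact h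
  have d1 : Disjoint (Finset.univ.filter fun p : ZMod L => (x (p - 1) = 0 ∧ x p = 1 ∧ x (p + 1) = 1 ∧ x (p + 2) = 1) ∧ x (p - 3) = 1 ∧ x (p - 2) = 1) (Finset.univ.filter fun p : ZMod L => (x (p - 1) = 0 ∧ x p = 1 ∧ x (p + 1) = 1 ∧ x (p + 2) = 1) ∧ x (p - 2) = 0) := by
    rw [Finset.disjoint_left]
    intro p hpA hpB
    have h1 := (Finset.mem_filter.mp hpA).2.2.2
    have h2 := (Finset.mem_filter.mp hpB).2.2
    rw [h1] at h2
    norm_num at h2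
  have d2 : Disjoint ((Finset.univ.filter fun p : ZMod L => (x (p - 1) = 0 ∧ x p = 1 ∧ x (p + 1) = 1 ∧ x (p + 2) = 1) ∧ x (p - 3) = 1 ∧ x (p - 2) = 1) ∪ (Finset.univ.filter fun p : ZMod L => (x (p - 1) = 0 ∧ x p = 1 ∧ x (p + 1) = 1 ∧ x (p + 2) = 1) ∧ x (p - 2) = 0)) (Finset.univ.filter fun p : ZMod L => (x (p - 1) = 0 ∧ x p = 1 ∧ x (p + 1) = 1 ∧ x (p + 2) = 1) ∧ x (p - 3) = 0 ∧ x (p - 2) = 1) := by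
    rw [Finset.disjoint_left]
    intro p hp hpC
    have hC := (Finset.mem_filter.mp hpC).2.2
    rcases Finset.mem_union.mp hp with h | h
    · have hA := (Finset.mem_filter.mp h).2.2.1
      have hC1 := hC.1
      rw [hC1] at hA
      norm_num at hA
    · have hB := (Finset.mem_filter.mp h).2.2
      have hC2 := hC.2
      rw [hB] at hC2
      norm_num at hC2
  rw [hch, hU, Finset.card_union_of_disjoint d2, Finset.card_union_of_disjoint d1,
    cardA x, cardB x, cardC x]

/-- the number of one-step predecessors of a configuration x. -/
theorem card_B (L : ℕ) (hL : 6 ≤ L) (x : ZMod L → ℤ) (hx : IsBin L x) :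
    ({x' : ZMod L → ℤ | inB L x' x}).ncard =
      2 ^ (patCount L x [1, 1, 0, 1, 1, 1] + patCount L x [0, 0, 1, 1, 1] +
        patCount L x [0, 1, 0, 1, 1, 1]) := by
  haveI : NeZero L := ⟨by omega⟩
  rw [card_B_pre hx, chSet_card hx]
end

section
/- Counting predecessors by type: for every configuration x : ZMod L → {0,1} and all naturals ℓ₁, ℓ₂, the number of predecessors x' ∈ B(x) satisfying ℓ(x',x) = #11010(x) + ℓ₁ and #010(x') = #0010(x) + #01010(x) + ℓ₂ equals C(#110111(x), ℓ₁) · C(#00111(x) + #010111(x), ℓ₂), where C(a,b) denotes the binomial coefficient. -/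
namespace CardB

open Finset

/-! ### Basic flux lemmas -/

lemma flux_ne_zero {w x y z b : ℤ} (h : flux w x y z b ≠ 0) : y = 1 ∧ z = 0 := by
  unfold flux at h
  split_ifs at h with h1 h2
  · exact ⟨h1.2.2.1, h1.2.2.2⟩
  · exact ⟨h2.2.2.1, h2.2.2.2⟩
  · exact absurd rfl h

lemma flux_b0_ne_zero {w x y z : ℤ} (h : flux w x y z 0 ≠ 0) : x = 0 := by
  unfold flux at h
  split_ifs at h with h1 h2
  · exact absurd rfl h
  · exact h2.2.1
  · exact absurd rfl h

lemma flux_0010 {w b : ℤ} (hw : w = 0 ∨ w = 1) : flux w 0 1 0 b = 1 := by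
  unfold flux
  split_ifs with h1 h2
  · exact absurd h1.2.1 (by norm_num)
  · rfl
  · exact absurd ⟨hw, rfl, rfl, rfl⟩ h2

lemma flux_1110 {b : ℤ} : flux 1 1 1 0 b = b := by simp [flux]

lemma flux_x1_w0 {y z b : ℤ} : flux 0 1 y z b = 0 := by
  unfold flux
  split_ifs with h1 h2
  · exact absurd h1.1 (by norm_num)
  · exact absurd h2.2.1 (by norm_num)
  · rfl

lemma flux_binary {w x y z b : ℤ} (hb : b = 0 ∨ b = 1) :
    flux w x y z b = 0 ∨ flux w x y z b = 1 := by
  unfold flux; split_ifs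
  · exact hb
  · exact Or.inr rfl
  · exact Or.inl rfl

/-! ### Displacement fields -/

/-- The key admissibility property of a displacement field `d` relative to `x`. -/
def Valid (L : ℕ) (x d : ZMod L → ℤ) : Prop :=
  (∀ j, d j = 0 ∨ d j = 1) ∧
  (∀ j, d j = 1 → x (j - 1) = 0 ∧ x j = 1 ∧
      (x (j + 1) = 0 ∨ (x (j + 1) = 1 ∧ x (j + 2) = 1))) ∧
  (∀ j, x (j - 1) = 0 → x j = 1 → x (j + 1) = 0 → d j = 1)

/-- The predecessor associated to a displacement field. -/
def Phi (L : ℕ) (x d : ZMod L → ℤ) : ZMod L → ℤ := fun j => x j - d j + d (j + 1)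

section core

variable {L : ℕ} {x d : ZMod L → ℤ}

lemma isBin_Phi (hx : IsBin L x) (hd : Valid L x d) : IsBin L (Phi L x d) := by
  intro j
  obtain ⟨hd1, hd2, hd3⟩ := hd
  have b0 := hx j
  have e0 := hd1 j; have ep := hd1 (j+1)
  have c0 := hd2 j; have cp := hd2 (j+1)
  simp only [Phi]
  ring_nf at *
  omega

lemma flux_core (a4 a3 a2 a1 a0 ap : ℤ) (d3 d2 d1 d0 dp : ℤ)
    (b3 : a3 = 0 ∨ a3 = 1) (b2 : a2 = 0 ∨ a2 = 1) (b1 : a1 = 0 ∨ a1 = 1)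
    (b0 : a0 = 0 ∨ a0 = 1)
    (e3 : d3 = 0 ∨ d3 = 1) (e2 : d2 = 0 ∨ d2 = 1) (e1 : d1 = 0 ∨ d1 = 1)
    (e0 : d0 = 0 ∨ d0 = 1) (ep : dp = 0 ∨ dp = 1)
    (c3 : d3 = 1 → a4 = 0 ∧ a3 = 1 ∧ (a2 = 0 ∨ (a2 = 1 ∧ a1 = 1)))
    (c2 : d2 = 1 → a3 = 0 ∧ a2 = 1 ∧ (a1 = 0 ∨ (a1 = 1 ∧ a0 = 1)))
    (c1 : d1 = 1 → a2 = 0 ∧ a1 = 1 ∧ (a0 = 0 ∨ (a0 = 1 ∧ ap = 1)))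
    (c0 : d0 = 1 → a1 = 0 ∧ a0 = 1)
    (cp : dp = 1 → a0 = 0)
    (f2 : a3 = 0 → a2 = 1 → a1 = 0 → d2 = 1)
    (f1 : a2 = 0 → a1 = 1 → a0 = 0 → d1 = 1) :
    flux (a3 - d3 + d2) (a2 - d2 + d1) (a1 - d1 + d0) (a0 - d0 + dp) d0 = d0 := by
  rcases e0 with h0 | h0 <;> subst h0
  · by_contra hne
    have g1 := flux_b0_ne_zero hne
    have g2 := (flux_ne_zero hne).1
    have g3 := (flux_ne_zero hne).2
    clear hne c3 f2 b3 e3 c0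
    omega
  · obtain ⟨ha1, ha0⟩ := c0 rfl
    have hdp : dp = 0 := by
      rcases ep with h | h
      · exact h
      · rw [cp h] at ha0; norm_num at ha0
    have hd1 : d1 = 0 := by
      rcases e1 with h | h
      · exact h
      · rw [(c1 h).2.1] at ha1; norm_num at ha1
    subst ha1; subst ha0; subst hdp; subst hd1
    rw [show a2 - d2 + 0 = a2 - d2 from by ring,
      show (0:ℤ) - 0 + 1 = 1 from by norm_num, show (1:ℤ) - 1 + 0 = 0 from by norm_num]
    have hw : a3 - d3 + d2 = 0 ∨ a3 - d3 + d2 = 1 := by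
      clear c1 f2 f1 b2 b1 b0 ep
      omega
    have hsplit : a2 - d2 = 0 ∨ (a2 - d2 = 1 ∧ a2 = 1 ∧ d2 = 0) := by
      clear c3 c1 f2 f1 b3 b1 b0 e3 ep hw
      omega
    rcases hsplit with hc | ⟨hc, hc2, hc3⟩
    · rw [hc]; exact flux_0010 hw
    · rw [hc]
      have hw1 : a3 - d3 + d2 = 1 := by
        clear c2 c1 f1 b1 b0 ep hw
        omega
      rw [hw1, flux_1110]

lemma flux_Phi (hx : IsBin L x) (hd : Valid L x d) (j : ZMod L) :
    flux (Phi L x d (j-3)) (Phi L x d (j-2)) (Phi L x d (j-1)) (Phi L x d j) (d j) = d j := by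
  obtain ⟨hd1, hd2, hd3⟩ := hd
  have c3 := hd2 (j-3)
  rw [show j-3-1 = j-4 from by ring, show j-3+1 = j-2 from by ring,
    show j-3+2 = j-1 from by ring] at c3
  have c2 := hd2 (j-2)
  rw [show j-2-1 = j-3 from by ring, show j-2+1 = j-1 from by ring,
    show j-2+2 = j from by ring] at c2
  have c1 := hd2 (j-1)
  rw [show j-1-1 = j-2 from by ring, show j-1+1 = j from by ring,
    show j-1+2 = j+1 from by ring] at c1
  have c0 : d j = 1 → x (j-1) = 0 ∧ x j = 1 := fun h => ⟨(hd2 j h).1, (hd2 j h).2.1⟩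
  have cp : d (j+1) = 1 → x j = 0 := by
    intro h
    have := (hd2 (j+1) h).1
    rwa [show j+1-1 = j from by ring] at this
  have f2 := hd3 (j-2)
  rw [show j-2-1 = j-3 from by ring, show j-2+1 = j-1 from by ring] at f2
  have f1 := hd3 (j-1)
  rw [show j-1-1 = j-2 from by ring, show j-1+1 = j from by ring] at f1
  simp only [Phi]
  rw [show j-3+1 = j-2 from by ring, show j-2+1 = j-1 from by ring,
    show j-1+1 = j from by ring]
  exact flux_core (x (j-4)) (x (j-3)) (x (j-2)) (x (j-1)) (x j) (x (j+1)) _ _ _ _ _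
    (hx _) (hx _) (hx _) (hx _) (hd1 _) (hd1 _) (hd1 _) (hd1 _) (hd1 _)
    c3 c2 c1 c0 cp f2 f1

lemma upd_Phi (hx : IsBin L x) (hd : Valid L x d) : upd L (Phi L x d) d = x := by
  funext j
  have h1 := flux_Phi hx hd j
  have h2 := flux_Phi hx hd (j+1)
  rw [show j+1-3 = j-2 from by ring, show j+1-2 = j-1 from by ring,
    show j+1-1 = j from by ring] at h2
  unfold upd
  rw [h1, h2]
  simp only [Phi]
  ring

lemma ell_char (hx : IsBin L x) (hd : Valid L x d) (j : ZMod L) :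
    (Phi L x d (j-3) = 1 ∧ Phi L x d (j-2) = 1 ∧ Phi L x d (j-1) = 1 ∧
      Phi L x d j = 0 ∧ x (j-1) = 0) ↔ (d j = 1 ∧ x (j-3) = 1 ∧ x (j-2) = 1) := by
  obtain ⟨hd1, hd2, hd3⟩ := hd
  have b3 := hx (j-3); have b2 := hx (j-2); have b1 := hx (j-1); have b0 := hx j
  have e3 := hd1 (j-3); have e2 := hd1 (j-2); have e1 := hd1 (j-1); have e0 := hd1 j
  have ep := hd1 (j+1)
  have c3 := hd2 (j-3); have c2 := hd2 (j-2); have c1 := hd2 (j-1); have c0 := hd2 j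
  have cp := hd2 (j+1)
  have f2 := hd3 (j-2); have f1 := hd3 (j-1); have f0 := hd3 j
  clear hx hd1 hd2 hd3
  simp only [Phi]
  ring_nf at *
  omega

lemma p010_char (hx : IsBin L x) (hd : Valid L x d) (j : ZMod L) :
    (Phi L x d j = 0 ∧ Phi L x d (j+1) = 1 ∧ Phi L x d (j+2) = 0) ↔
      (d (j+2) = 1 ∧ (x j = 0 ∨ x (j-1) = 0)) := by
  obtain ⟨hd1, hd2, hd3⟩ := hd
  have b1 := hx (j-1); have b0 := hx j; have bp := hx (j+1); have bq := hx (j+2)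
  have e0 := hd1 j; have ep := hd1 (j+1); have eq := hd1 (j+2); have er := hd1 (j+3)
  have c0 := hd2 j; have cp := hd2 (j+1); have cq := hd2 (j+2); have cr := hd2 (j+3)
  have f0 := hd3 j; have fp := hd3 (j+1); have fq := hd3 (j+2)
  clear hx hd1 hd2 hd3
  simp only [Phi]
  ring_nf at *
  omega

end core

/-! ### Counting infrastructure -/

section count

variable {L : ℕ} [NeZero L]

lemma card_nat_filter_eq (P : ZMod L → Prop) [DecidablePred P] :
    ((Finset.range L).filter fun j : ℕ => P ((j : ℕ) : ZMod L)).card =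
      (Finset.univ.filter P).card := by
  apply Finset.card_bij (fun j _ => ((j : ℕ) : ZMod L))
  · intro a ha
    simp only [mem_filter, mem_range] at ha ⊢
    exact ⟨mem_univ _, ha.2⟩
  · intro a ha b hb h
    simp only [mem_filter, mem_range] at ha hb
    have := congrArg ZMod.val h
    rwa [ZMod.val_cast_of_lt ha.1, ZMod.val_cast_of_lt hb.1] at this
  · intro z hz
    refine ⟨z.val, ?_, ?_⟩
    · simp only [mem_filter, mem_range]
      refine ⟨ZMod.val_lt z, ?_⟩
      simpa [ZMod.natCast_val] using (mem_filter.mp hz).2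
    · simp [ZMod.natCast_val]

lemma card_filter_shift (c : ZMod L) (P Q : ZMod L → Prop) [DecidablePred P]
    [DecidablePred Q] (h : ∀ z, P z ↔ Q (z + c)) :
    (Finset.univ.filter P).card = (Finset.univ.filter Q).card := by
  apply Finset.card_bij (fun z _ => z + c)
  · intro a ha
    simp only [mem_filter] at ha ⊢
    exact ⟨mem_univ _, (h a).mp ha.2⟩
  · intro a _ b _ hab
    exact by simpa using congrArg (fun t => t - c) hab
  · intro z hz
    refine ⟨z - c, ?_, by ring⟩
    simp only [mem_filter] at hz ⊢
    exact ⟨mem_univ _, (h (z - c)).mpr (by rw [sub_add_cancel]; exact hz.2)⟩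

lemma patCount_eq (x : ZMod L → ℤ) (w : List ℤ) :
    patCount L x w =
      (Finset.univ.filter fun z : ZMod L =>
        ∀ i < w.length, x (z + (i : ℕ)) = w.getD i 0).card := by
  unfold patCount
  rw [← card_nat_filter_eq (fun z : ZMod L => ∀ i < w.length, x (z + (i : ℕ)) = w.getD i 0)]
  apply congrArg
  apply Finset.filter_congr
  intro j _
  constructor
  · intro h i hi
    have := h i hi
    rwa [Nat.cast_add] at this
  · intro h i hi
    have := h i hi
    rwa [← Nat.cast_add] at this

lemma patCount3 (x : ZMod L → ℤ) (a b c : ℤ) :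
    patCount L x [a, b, c] =
      (Finset.univ.filter fun z : ZMod L =>
        x z = a ∧ x (z + 1) = b ∧ x (z + 2) = c).card := by
  rw [patCount_eq]
  apply congrArg
  apply Finset.filter_congr
  intro z _
  constructor
  · intro h
    exact ⟨by simpa using h 0 (by norm_num), by simpa using h 1 (by norm_num),
      by simpa using h 2 (by norm_num)⟩
  · rintro ⟨h0, h1, h2⟩ i hi
    simp only [List.length_cons, List.length_nil] at hi
    interval_cases i
    · simpa using h0
    · simpa using h1
    · simpa using h2

lemma patCount4 (x : ZMod L → ℤ) (a b c d : ℤ) :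
    patCount L x [a, b, c, d] =
      (Finset.univ.filter fun z : ZMod L =>
        x z = a ∧ x (z + 1) = b ∧ x (z + 2) = c ∧ x (z + 3) = d).card := by
  rw [patCount_eq]
  apply congrArg
  apply Finset.filter_congr
  intro z _
  constructor
  · intro h
    exact ⟨by simpa using h 0 (by norm_num), by simpa using h 1 (by norm_num),
      by simpa using h 2 (by norm_num), by simpa using h 3 (by norm_num)⟩
  · rintro ⟨h0, h1, h2, h3⟩ i hi
    simp only [List.length_cons, List.length_nil] at hi
    interval_cases i
    · simpa using h0
    · simpa using h1
    · simpa using h2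
    · simpa using h3

lemma patCount5 (x : ZMod L → ℤ) (a b c d e : ℤ) :
    patCount L x [a, b, c, d, e] =
      (Finset.univ.filter fun z : ZMod L =>
        x z = a ∧ x (z + 1) = b ∧ x (z + 2) = c ∧ x (z + 3) = d ∧ x (z + 4) = e).card := by
  rw [patCount_eq]
  apply congrArg
  apply Finset.filter_congr
  intro z _
  constructor
  · intro h
    exact ⟨by simpa using h 0 (by norm_num), by simpa using h 1 (by norm_num),
      by simpa using h 2 (by norm_num), by simpa using h 3 (by norm_num),
      by simpa using h 4 (by norm_num)⟩
  · rintro ⟨h0, h1, h2, h3, h4⟩ i hi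
    simp only [List.length_cons, List.length_nil] at hi
    interval_cases i
    · simpa using h0
    · simpa using h1
    · simpa using h2
    · simpa using h3
    · simpa using h4

lemma patCount6 (x : ZMod L → ℤ) (a b c d e f : ℤ) :
    patCount L x [a, b, c, d, e, f] =
      (Finset.univ.filter fun z : ZMod L =>
        x z = a ∧ x (z + 1) = b ∧ x (z + 2) = c ∧ x (z + 3) = d ∧ x (z + 4) = e ∧
          x (z + 5) = f).card := by
  rw [patCount_eq]
  apply congrArg
  apply Finset.filter_congr
  intro z _
  constructor
  · intro h
    exact ⟨by simpa using h 0 (by norm_num), by simpa using h 1 (by norm_num),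
      by simpa using h 2 (by norm_num), by simpa using h 3 (by norm_num),
      by simpa using h 4 (by norm_num), by simpa using h 5 (by norm_num)⟩
  · rintro ⟨h0, h1, h2, h3, h4, h5⟩ i hi
    simp only [List.length_cons, List.length_nil] at hi
    interval_cases i
    · simpa using h0
    · simpa using h1
    · simpa using h2
    · simpa using h3
    · simpa using h4
    · simpa using h5

lemma ell_eq_card (x' x : ZMod L → ℤ) :
    ell L x' x = (Finset.univ.filter fun z : ZMod L =>
      x' (z - 3) = 1 ∧ x' (z - 2) = 1 ∧ x' (z - 1) = 1 ∧ x' z = 0 ∧ x (z - 1) = 0).card := by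
  unfold ell
  exact card_nat_filter_eq (fun z : ZMod L =>
    x' (z - 3) = 1 ∧ x' (z - 2) = 1 ∧ x' (z - 1) = 1 ∧ x' z = 0 ∧ x (z - 1) = 0)

end count

/-! ### The three pattern classes -/

/-- forced move targets: `x` has pattern 010 centered at `j`. -/
abbrev D1c {L : ℕ} (x : ZMod L → ℤ) (j : ZMod L) : Prop :=
  x (j - 1) = 0 ∧ x j = 1 ∧ x (j + 1) = 0

/-- free move targets of ℓ-type: `x` has pattern 110111 ending two after `j`. -/
abbrev A1c {L : ℕ} (x : ZMod L → ℤ) (j : ZMod L) : Prop :=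
  x (j - 3) = 1 ∧ x (j - 2) = 1 ∧ x (j - 1) = 0 ∧ x j = 1 ∧ x (j + 1) = 1 ∧ x (j + 2) = 1

/-- free move targets of 010-type. -/
abbrev A2c {L : ℕ} (x : ZMod L → ℤ) (j : ZMod L) : Prop :=
  (x (j - 2) = 0 ∨ (x (j - 3) = 0 ∧ x (j - 2) = 1)) ∧ x (j - 1) = 0 ∧ x j = 1 ∧
    x (j + 1) = 1 ∧ x (j + 2) = 1

/-- The displacement field associated to a pair of sets of free-move choices. -/
def dInd {L : ℕ} (x : ZMod L → ℤ) (S1 S2 : Finset (ZMod L)) : ZMod L → ℤ :=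
  fun j => if D1c x j ∨ j ∈ S1 ∨ j ∈ S2 then 1 else 0

section ind

variable {L : ℕ} {x : ZMod L → ℤ} {S1 S2 : Finset (ZMod L)}

lemma dInd_binary : IsBin L (dInd x S1 S2) := by
  intro j
  unfold dInd
  split_ifs <;> simp

lemma dInd_one_iff {j : ZMod L} :
    dInd x S1 S2 j = 1 ↔ (D1c x j ∨ j ∈ S1 ∨ j ∈ S2) := by
  unfold dInd
  split_ifs with h <;> simp [h]

lemma valid_dInd (hx : IsBin L x) (hS1 : ∀ j ∈ S1, A1c x j) (hS2 : ∀ j ∈ S2, A2c x j) :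
    Valid L x (dInd x S1 S2) := by
  refine ⟨fun j => dInd_binary j, fun j hj => ?_, fun j h1 h2 h3 => ?_⟩
  · rcases dInd_one_iff.mp hj with h | h | h
    · exact ⟨h.1, h.2.1, Or.inl h.2.2⟩
    · obtain ⟨_, _, h3, h4, h5, h6⟩ := hS1 j h
      exact ⟨h3, h4, Or.inr ⟨h5, h6⟩⟩
    · obtain ⟨_, h3, h4, h5, h6⟩ := hS2 j h
      exact ⟨h3, h4, Or.inr ⟨h5, h6⟩⟩
  · exact dInd_one_iff.mpr (Or.inl ⟨h1, h2, h3⟩)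

end ind

/-! ### Counting lemmas -/

section countmain

variable {L : ℕ} [NeZero L] {x : ZMod L → ℤ} {S1 S2 : Finset (ZMod L)}

lemma cardA1 (x : ZMod L → ℤ) :
    (Finset.univ.filter (A1c x)).card = patCount L x [1, 1, 0, 1, 1, 1] := by
  rw [patCount6]
  apply card_filter_shift (-3)
  intro z
  unfold A1c
  rw [show z + -3 = z - 3 from by ring, show z - 3 + 1 = z - 2 from by ring,
    show z - 3 + 2 = z - 1 from by ring, show z - 3 + 3 = z from by ring,
    show z - 3 + 4 = z + 1 from by ring, show z - 3 + 5 = z + 2 from by ring]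

lemma cardA2 (x : ZMod L → ℤ) :
    (Finset.univ.filter (A2c x)).card =
      patCount L x [0, 0, 1, 1, 1] + patCount L x [0, 1, 0, 1, 1, 1] := by
  rw [patCount5, patCount6]
  have hsplit : Finset.univ.filter (A2c x) =
      (Finset.univ.filter fun j : ZMod L =>
        x (j - 2) = 0 ∧ x (j - 1) = 0 ∧ x j = 1 ∧ x (j + 1) = 1 ∧ x (j + 2) = 1) ∪
      (Finset.univ.filter fun j : ZMod L =>
        x (j - 3) = 0 ∧ x (j - 2) = 1 ∧ x (j - 1) = 0 ∧ x j = 1 ∧ x (j + 1) = 1 ∧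
          x (j + 2) = 1) := by
    ext j
    simp only [mem_union, mem_filter, mem_univ, true_and]
    unfold A2c
    tauto
  rw [hsplit, card_union_of_disjoint]
  · congr 1
    · apply card_filter_shift (-2)
      intro z
      rw [show z + -2 = z - 2 from by ring, show z - 2 + 1 = z - 1 from by ring,
        show z - 2 + 2 = z from by ring, show z - 2 + 3 = z + 1 from by ring,
        show z - 2 + 4 = z + 2 from by ring]
    · apply card_filter_shift (-3)
      intro z
      rw [show z + -3 = z - 3 from by ring, show z - 3 + 1 = z - 2 from by ring,
        show z - 3 + 2 = z - 1 from by ring, show z - 3 + 3 = z from by ring,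
        show z - 3 + 4 = z + 1 from by ring, show z - 3 + 5 = z + 2 from by ring]
  · rw [Finset.disjoint_left]
    intro j hj hj'
    simp only [mem_filter] at hj hj'
    have := hj.2.1
    have := hj'.2.2.1
    omega

lemma ell_count (hx : IsBin L x) (hS1 : ∀ j ∈ S1, A1c x j) (hS2 : ∀ j ∈ S2, A2c x j) :
    ell L (Phi L x (dInd x S1 S2)) x = patCount L x [1, 1, 0, 1, 0] + S1.card := by
  have hv := valid_dInd hx hS1 hS2
  rw [ell_eq_card]
  rw [Finset.filter_congr (fun j _ => ell_char hx hv j)]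
  have hsplit : (Finset.univ.filter fun j : ZMod L =>
      dInd x S1 S2 j = 1 ∧ x (j - 3) = 1 ∧ x (j - 2) = 1) =
      (Finset.univ.filter fun j : ZMod L =>
        x (j - 3) = 1 ∧ x (j - 2) = 1 ∧ x (j - 1) = 0 ∧ x j = 1 ∧ x (j + 1) = 0) ∪ S1 := by
    ext j
    simp only [mem_union, mem_filter, mem_univ, true_and, dInd_one_iff]
    constructor
    · rintro ⟨h | h | h, h3, h2⟩
      · exact Or.inl ⟨h3, h2, h.1, h.2.1, h.2.2⟩
      · exact Or.inr h
      · rcases (hS2 j h).1 with g | g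
        · rw [g] at h2; norm_num at h2
        · rw [g.1] at h3; norm_num at h3
    · rintro (⟨h3, h2, hm1, h0, hp1⟩ | h)
      · exact ⟨Or.inl ⟨hm1, h0, hp1⟩, h3, h2⟩
      · obtain ⟨g3, g2, _, _, _, _⟩ := hS1 j h
        exact ⟨Or.inr (Or.inl h), g3, g2⟩
  rw [hsplit, card_union_of_disjoint]
  · congr 1
    rw [patCount5]
    apply card_filter_shift (-3)
    intro z
    rw [show z + -3 = z - 3 from by ring, show z - 3 + 1 = z - 2 from by ring,
      show z - 3 + 2 = z - 1 from by ring, show z - 3 + 3 = z from by ring,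
      show z - 3 + 4 = z + 1 from by ring]
  · rw [Finset.disjoint_left]
    intro j hj hj'
    simp only [mem_filter] at hj
    have h1 := hj.2.2.2.2.2
    have h2 := (hS1 j hj').2.2.2.2.1
    omega

lemma p010_count (hx : IsBin L x) (hS1 : ∀ j ∈ S1, A1c x j) (hS2 : ∀ j ∈ S2, A2c x j) :
    patCount L (Phi L x (dInd x S1 S2)) [0, 1, 0] =
      patCount L x [0, 0, 1, 0] + patCount L x [0, 1, 0, 1, 0] + S2.card := by
  have hv := valid_dInd hx hS1 hS2
  rw [patCount3]
  rw [Finset.filter_congr (fun j _ => p010_char hx hv j)]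
  rw [card_filter_shift (2 : ZMod L)
    (fun j => dInd x S1 S2 (j + 2) = 1 ∧ (x j = 0 ∨ x (j - 1) = 0))
    (fun j => dInd x S1 S2 j = 1 ∧ (x (j - 2) = 0 ∨ x (j - 3) = 0))
    (fun z => by
      beta_reduce
      rw [show z + 2 - 2 = z from by ring, show z + 2 - 3 = z - 1 from by ring])]
  have hsplit : (Finset.univ.filter fun j : ZMod L =>
      dInd x S1 S2 j = 1 ∧ (x (j - 2) = 0 ∨ x (j - 3) = 0)) =
      ((Finset.univ.filter fun j : ZMod L =>
        x (j - 2) = 0 ∧ x (j - 1) = 0 ∧ x j = 1 ∧ x (j + 1) = 0) ∪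
       (Finset.univ.filter fun j : ZMod L =>
        x (j - 3) = 0 ∧ x (j - 2) = 1 ∧ x (j - 1) = 0 ∧ x j = 1 ∧ x (j + 1) = 0)) ∪ S2 := by
    ext j
    simp only [mem_union, mem_filter, mem_univ, true_and, dInd_one_iff]
    constructor
    · rintro ⟨h | h | h, hd⟩
      · obtain ⟨hm1, h0, hp1⟩ := h
        rcases hx (j - 2) with g2 | g2
        · exact Or.inl (Or.inl ⟨g2, hm1, h0, hp1⟩)
        · rcases hd with g | g
          · rw [g2] at g; norm_num at g
          · exact Or.inl (Or.inr ⟨g, g2, hm1, h0, hp1⟩)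
      · obtain ⟨g3, g2, _, _, _, _⟩ := hS1 j h
        rcases hd with g | g
        · rw [g2] at g; norm_num at g
        · rw [g3] at g; norm_num at g
      · exact Or.inr h
    · rintro ((⟨g2, hm1, h0, hp1⟩ | ⟨g3, g2, hm1, h0, hp1⟩) | h)
      · exact ⟨Or.inl ⟨hm1, h0, hp1⟩, Or.inl g2⟩
      · exact ⟨Or.inl ⟨hm1, h0, hp1⟩, Or.inr g3⟩
      · refine ⟨Or.inr (Or.inr h), ?_⟩
        rcases (hS2 j h).1 with g | g
        · exact Or.inl g
        · exact Or.inr g.1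
  rw [hsplit, card_union_of_disjoint, card_union_of_disjoint]
  · congr 2
    · rw [patCount4]
      apply card_filter_shift (-2)
      intro z
      rw [show z + -2 = z - 2 from by ring, show z - 2 + 1 = z - 1 from by ring,
        show z - 2 + 2 = z from by ring, show z - 2 + 3 = z + 1 from by ring]
    · rw [patCount5]
      apply card_filter_shift (-3)
      intro z
      rw [show z + -3 = z - 3 from by ring, show z - 3 + 1 = z - 2 from by ring,
        show z - 3 + 2 = z - 1 from by ring, show z - 3 + 3 = z from by ring,
        show z - 3 + 4 = z + 1 from by ring]
  · rw [Finset.disjoint_left]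
    intro j hj hj'
    simp only [mem_filter] at hj hj'
    have := hj.2.1
    have := hj'.2.2.1
    omega
  · rw [Finset.disjoint_left]
    intro j hj hj'
    simp only [mem_union, mem_filter] at hj
    have h2 := (hS2 j hj').2.2.2.1
    rcases hj with h | h
    · have := h.2.2.2.2; omega
    · have := h.2.2.2.2.2; omega

end countmain

/-! ### Injectivity -/

section inj

variable {L : ℕ} {x : ZMod L → ℤ}

lemma dInd_pred_zero {S1 S2 : Finset (ZMod L)}
    (hS1 : ∀ j ∈ S1, A1c x j) (hS2 : ∀ j ∈ S2, A2c x j) {j : ZMod L}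
    (hj : x (j - 1) = 0) : dInd x S1 S2 (j - 1) = 0 := by
  rcases dInd_binary (x := x) (S1 := S1) (S2 := S2) (j - 1) with h | h
  · exact h
  · exfalso
    rcases dInd_one_iff.mp h with g | g | g
    · rw [g.2.1] at hj; norm_num at hj
    · rw [(hS1 _ g).2.2.2.1] at hj; norm_num at hj
    · rw [(hS2 _ g).2.2.1] at hj; norm_num at hj

lemma Phi_pred {S1 S2 : Finset (ZMod L)}
    (hS1 : ∀ j ∈ S1, A1c x j) (hS2 : ∀ j ∈ S2, A2c x j) {j : ZMod L}
    (hj : x (j - 1) = 0) : Phi L x (dInd x S1 S2) (j - 1) = dInd x S1 S2 j := by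
  show x (j - 1) - dInd x S1 S2 (j - 1) + dInd x S1 S2 (j - 1 + 1) = _
  rw [show j - 1 + 1 = j from by ring, hj, dInd_pred_zero hS1 hS2 hj]
  ring

lemma mem1_trans {S1 S2 T1 T2 : Finset (ZMod L)}
    (hS1 : ∀ j ∈ S1, A1c x j) (hS2 : ∀ j ∈ S2, A2c x j)
    (hT1 : ∀ j ∈ T1, A1c x j) (hT2 : ∀ j ∈ T2, A2c x j)
    (h : Phi L x (dInd x S1 S2) = Phi L x (dInd x T1 T2)) {j : ZMod L}
    (hj : j ∈ S1) : j ∈ T1 := by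
  have hA := hS1 j hj
  have h1 : Phi L x (dInd x S1 S2) (j - 1) = dInd x S1 S2 j := Phi_pred hS1 hS2 hA.2.2.1
  have h2 : Phi L x (dInd x T1 T2) (j - 1) = dInd x T1 T2 j := Phi_pred hT1 hT2 hA.2.2.1
  have h3 : dInd x T1 T2 j = 1 := by
    rw [← h2, ← h, h1, dInd_one_iff]
    exact Or.inr (Or.inl hj)
  rcases dInd_one_iff.mp h3 with g | g | g
  · exfalso
    have h4 := g.2.2
    have h5 := hA.2.2.2.2.1
    omega
  · exact g
  · exfalso
    rcases (hT2 _ g).1 with g2 | g2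
    · rw [hA.2.1] at g2; norm_num at g2
    · rw [hA.1] at g2; norm_num at g2

lemma mem2_trans {S1 S2 T1 T2 : Finset (ZMod L)}
    (hS1 : ∀ j ∈ S1, A1c x j) (hS2 : ∀ j ∈ S2, A2c x j)
    (hT1 : ∀ j ∈ T1, A1c x j) (hT2 : ∀ j ∈ T2, A2c x j)
    (h : Phi L x (dInd x S1 S2) = Phi L x (dInd x T1 T2)) {j : ZMod L}
    (hj : j ∈ S2) : j ∈ T2 := by
  have hA := hS2 j hj
  have h1 : Phi L x (dInd x S1 S2) (j - 1) = dInd x S1 S2 j := Phi_pred hS1 hS2 hA.2.1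
  have h2 : Phi L x (dInd x T1 T2) (j - 1) = dInd x T1 T2 j := Phi_pred hT1 hT2 hA.2.1
  have h3 : dInd x T1 T2 j = 1 := by
    rw [← h2, ← h, h1, dInd_one_iff]
    exact Or.inr (Or.inr hj)
  rcases dInd_one_iff.mp h3 with g | g | g
  · exfalso
    have h4 := g.2.2
    have h5 := hA.2.2.2.1
    omega
  · exfalso
    have g1 := (hT1 _ g).1
    have g2 := (hT1 _ g).2.1
    rcases hA.1 with g3 | g3
    · rw [g2] at g3; norm_num at g3
    · rw [g1] at g3; exact absurd g3.1 (by norm_num)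
  · exact g

lemma Phi_inj {S1 S2 T1 T2 : Finset (ZMod L)}
    (hS1 : ∀ j ∈ S1, A1c x j) (hS2 : ∀ j ∈ S2, A2c x j)
    (hT1 : ∀ j ∈ T1, A1c x j) (hT2 : ∀ j ∈ T2, A2c x j)
    (h : Phi L x (dInd x S1 S2) = Phi L x (dInd x T1 T2)) : S1 = T1 ∧ S2 = T2 := by
  constructor
  · ext j
    exact ⟨fun hj => mem1_trans hS1 hS2 hT1 hT2 h hj,
      fun hj => mem1_trans hT1 hT2 hS1 hS2 h.symm hj⟩
  · ext j
    exact ⟨fun hj => mem2_trans hS1 hS2 hT1 hT2 h hj,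
      fun hj => mem2_trans hT1 hT2 hS1 hS2 h.symm hj⟩

end inj

/-! ### Decoding a predecessor -/

section decode

variable {L : ℕ} [NeZero L] {x : ZMod L → ℤ}

lemma classify (hx : IsBin L x) {j : ZMod L} (h1 : x (j - 1) = 0) (h2 : x j = 1)
    (h3 : x (j + 1) = 0 ∨ (x (j + 1) = 1 ∧ x (j + 2) = 1)) :
    D1c x j ∨ A1c x j ∨ A2c x j := by
  rcases h3 with h | ⟨hp, hq⟩
  · exact Or.inl ⟨h1, h2, h⟩
  · rcases hx (j - 2) with g2 | g2
    · exact Or.inr (Or.inr ⟨Or.inl g2, h1, h2, hp, hq⟩)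
    · rcases hx (j - 3) with g3 | g3
      · exact Or.inr (Or.inr ⟨Or.inr ⟨g3, g2⟩, h1, h2, hp, hq⟩)
      · exact Or.inr (Or.inl ⟨g3, g2, h1, h2, hp, hq⟩)

lemma decode (hx : IsBin L x) {x' : ZMod L → ℤ} (h : inB L x' x) :
    ∃ S1 S2 : Finset (ZMod L), (∀ j ∈ S1, A1c x j) ∧ (∀ j ∈ S2, A2c x j) ∧
      x' = Phi L x (dInd x S1 S2) := by
  obtain ⟨hx', b, hb, hupd⟩ := h
  set d : ZMod L → ℤ := fun k => flux (x' (k - 3)) (x' (k - 2)) (x' (k - 1)) (x' k) (b k)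
    with hd
  have dbin : ∀ k, d k = 0 ∨ d k = 1 := fun k => flux_binary (hb k)
  have dwin : ∀ m, d m = flux (x' (m - 3)) (x' (m - 2)) (x' (m - 1)) (x' m) (b m) :=
    fun m => rfl
  have rel : ∀ j, x j = x' j + d j - d (j + 1) := by
    intro j
    have h0 := congrFun hupd j
    unfold upd at h0
    rw [dwin j, dwin (j + 1)]
    rw [show j + 1 - 3 = j - 2 from by ring, show j + 1 - 2 = j - 1 from by ring,
      show j + 1 - 1 = j from by ring]
    omega
  have dz : ∀ m, d m = 1 → x' (m - 1) = 1 ∧ x' m = 0 := by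
    intro m hm
    rw [dwin m] at hm
    exact flux_ne_zero (by rw [hm]; norm_num)
  have hvalid : Valid L x d := by
    refine ⟨dbin, fun k hk => ?_, fun k h1 h2 h3 => ?_⟩
    · obtain ⟨hy, hz⟩ := dz k hk
      have hk1 : d (k + 1) = 0 := by
        rcases dbin (k + 1) with h | h
        · exact h
        · exfalso
          have := (dz _ h).1
          rw [show k + 1 - 1 = k from by ring] at this
          omega
      have hkm1 : d (k - 1) = 0 := by
        rcases dbin (k - 1) with h | h
        · exact h
        · have := (dz _ h).2; omega
      have hxm : x (k - 1) = 0 := by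
        have hrm := rel (k - 1)
        rw [show k - 1 + 1 = k from by ring] at hrm
        omega
      have hx0 : x k = 1 := by
        have hr := rel k
        omega
      refine ⟨hxm, hx0, ?_⟩
      rcases hx (k + 1) with hp | hp
      · exact Or.inl hp
      · right
        refine ⟨hp, ?_⟩
        have hrp := rel (k + 1)
        rw [show k + 1 + 1 = k + 2 from by ring] at hrp
        have hxp1 : x' (k + 1) = 1 ∧ d (k + 2) = 0 := by
          have := hx' (k + 1)
          have := dbin (k + 2)
          omega
        have hq : x' (k + 2) = 1 := by
          rcases hx' (k + 2) with hh | hh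
          · exfalso
            have hd2 := dwin (k + 2)
            rw [show k + 2 - 3 = k - 1 from by ring, show k + 2 - 2 = k from by ring,
              show k + 2 - 1 = k + 1 from by ring, hy, hz, hxp1.1, hh] at hd2
            rw [flux_0010 (Or.inr rfl)] at hd2
            omega
          · exact hh
        have hd3 : d (k + 3) = 0 := by
          have hw := dwin (k + 3)
          rw [show k + 3 - 3 = k from by ring, show k + 3 - 2 = k + 1 from by ring,
            show k + 3 - 1 = k + 2 from by ring, hz, hxp1.1] at hw
          rw [hw, flux_x1_w0]
        have hr2 := rel (k + 2)
        rw [show k + 2 + 1 = k + 3 from by ring] at hr2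
        omega
    · by_contra h0
      have hk0 : d k = 0 := by rcases dbin k with h | h; exact h; exact absurd h h0
      have hr := rel k
      have hmain : x' k = 1 ∧ d (k + 1) = 0 := by
        have := hx' k
        have := dbin (k + 1)
        omega
      have hrm := rel (k - 1)
      rw [show k - 1 + 1 = k from by ring] at hrm
      have hmm : x' (k - 1) = 0 ∧ d (k - 1) = 0 := by
        have := hx' (k - 1)
        have := dbin (k - 1)
        omega
      have hrp := rel (k + 1)
      rw [show k + 1 + 1 = k + 2 from by ring] at hrp
      rcases hx' (k + 1) with hp | hp
      · have hw := dwin (k + 1)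
        rw [show k + 1 - 3 = k - 2 from by ring, show k + 1 - 2 = k - 1 from by ring,
          show k + 1 - 1 = k from by ring, hmm.1, hmain.1, hp] at hw
        rw [flux_0010 (hx' (k - 2))] at hw
        omega
      · have hd2 : d (k + 2) = 1 := by
          have := dbin (k + 2)
          omega
        have hw := dwin (k + 2)
        rw [show k + 2 - 3 = k - 1 from by ring, show k + 2 - 2 = k from by ring,
          show k + 2 - 1 = k + 1 from by ring, hmm.1, hmain.1, hp] at hw
        rw [flux_x1_w0] at hw
        omega
  classical
  refine ⟨Finset.univ.filter (fun j => A1c x j ∧ d j = 1),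
    Finset.univ.filter (fun j => A2c x j ∧ d j = 1), ?_, ?_, ?_⟩
  · intro j hj; exact (Finset.mem_filter.mp hj).2.1
  · intro j hj; exact (Finset.mem_filter.mp hj).2.1
  · have hdind : ∀ k, dInd x (Finset.univ.filter (fun j => A1c x j ∧ d j = 1))
        (Finset.univ.filter (fun j => A2c x j ∧ d j = 1)) k = d k := by
      intro k
      rcases dbin k with h | h
      · rw [h]
        rcases dInd_binary (x := x) k with g | g
        · exact g
        · exfalso
          rcases dInd_one_iff.mp g with g1 | g1 | g1
          · have := hvalid.2.2 k g1.1 g1.2.1 g1.2.2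
            omega
          · have := (Finset.mem_filter.mp g1).2.2
            omega
          · have := (Finset.mem_filter.mp g1).2.2
            omega
      · rw [h, dInd_one_iff]
        have hprop := hvalid.2.1 k h
        rcases classify hx hprop.1 hprop.2.1 hprop.2.2 with g | g | g
        · exact Or.inl g
        · exact Or.inr (Or.inl (Finset.mem_filter.mpr ⟨Finset.mem_univ _, g, h⟩))
        · exact Or.inr (Or.inr (Finset.mem_filter.mpr ⟨Finset.mem_univ _, g, h⟩))
    funext j
    show x' j = x j - _ + _
    rw [hdind j, hdind (j + 1)]
    have := rel j
    omega

end decode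

end CardB

/-- counting the predecessors of x with prescribed values of ℓ(x',x)
and #010(x'). -/
theorem card_B_by_type (L : ℕ) (hL : 6 ≤ L) (x : ZMod L → ℤ) (hx : IsBin L x)
    (l₁ l₂ : ℕ) :
    ({x' : ZMod L → ℤ | inB L x' x ∧
        ell L x' x = patCount L x [1, 1, 0, 1, 0] + l₁ ∧
        patCount L x' [0, 1, 0] =
          patCount L x [0, 0, 1, 0] + patCount L x [0, 1, 0, 1, 0] + l₂}).ncard =
      Nat.choose (patCount L x [1, 1, 0, 1, 1, 1]) l₁ *
        Nat.choose (patCount L x [0, 0, 1, 1, 1] + patCount L x [0, 1, 0, 1, 1, 1]) l₂ := by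
  haveI : NeZero L := ⟨by omega⟩
  classical
  set A1f : Finset (ZMod L) := Finset.univ.filter (CardB.A1c x) with hA1f
  set A2f : Finset (ZMod L) := Finset.univ.filter (CardB.A2c x) with hA2f
  set T : Finset (Finset (ZMod L) × Finset (ZMod L)) :=
    A1f.powersetCard l₁ ×ˢ A2f.powersetCard l₂ with hT
  set F : Finset (ZMod L) × Finset (ZMod L) → (ZMod L → ℤ) :=
    fun p => CardB.Phi L x (CardB.dInd x p.1 p.2) with hF
  have hTprop : ∀ p ∈ T, (∀ j ∈ p.1, CardB.A1c x j) ∧ (∀ j ∈ p.2, CardB.A2c x j) ∧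
      p.1.card = l₁ ∧ p.2.card = l₂ := by
    intro p hp
    rw [hT, Finset.mem_product, Finset.mem_powersetCard, Finset.mem_powersetCard] at hp
    exact ⟨fun j hj => (Finset.mem_filter.mp (hp.1.1 hj)).2,
      fun j hj => (Finset.mem_filter.mp (hp.2.1 hj)).2, hp.1.2, hp.2.2⟩
  have hset : {x' : ZMod L → ℤ | inB L x' x ∧
      ell L x' x = patCount L x [1, 1, 0, 1, 0] + l₁ ∧
      patCount L x' [0, 1, 0] =
        patCount L x [0, 0, 1, 0] + patCount L x [0, 1, 0, 1, 0] + l₂} = ↑(T.image F) := by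
    ext x'
    simp only [Set.mem_setOf_eq, Finset.coe_image, Set.mem_image, Finset.mem_coe]
    constructor
    · rintro ⟨hB, hell, h010⟩
      obtain ⟨S1, S2, hS1, hS2, heq⟩ := CardB.decode hx hB
      have he1 : ell L x' x = patCount L x [1, 1, 0, 1, 0] + S1.card := by
        rw [heq]; exact CardB.ell_count hx hS1 hS2
      have he2 : patCount L x' [0, 1, 0] =
          patCount L x [0, 0, 1, 0] + patCount L x [0, 1, 0, 1, 0] + S2.card := by
        rw [heq]; exact CardB.p010_count hx hS1 hS2
      have hc1 : S1.card = l₁ := by omega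
      have hc2 : S2.card = l₂ := by omega
      refine ⟨(S1, S2), ?_, heq.symm⟩
      rw [hT, Finset.mem_product]
      exact ⟨Finset.mem_powersetCard.mpr
          ⟨fun j hj => Finset.mem_filter.mpr ⟨Finset.mem_univ _, hS1 j hj⟩, hc1⟩,
        Finset.mem_powersetCard.mpr
          ⟨fun j hj => Finset.mem_filter.mpr ⟨Finset.mem_univ _, hS2 j hj⟩, hc2⟩⟩
    · rintro ⟨p, hp, rfl⟩
      obtain ⟨hS1, hS2, hc1, hc2⟩ := hTprop p hp
      have hv := CardB.valid_dInd hx hS1 hS2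
      refine ⟨⟨CardB.isBin_Phi hx hv, CardB.dInd x p.1 p.2, CardB.dInd_binary,
        CardB.upd_Phi hx hv⟩, ?_, ?_⟩
      · rw [CardB.ell_count hx hS1 hS2, hc1]
      · rw [CardB.p010_count hx hS1 hS2, hc2]
  rw [hset, Set.ncard_coe_finset]
  rw [Finset.card_image_of_injOn, hT, Finset.card_product, Finset.card_powersetCard,
    Finset.card_powersetCard, hA1f, hA2f, CardB.cardA1, CardB.cardA2]
  intro p hp q hq hpq
  simp only [Finset.mem_coe] at hp hq
  obtain ⟨hS1, hS2, _, _⟩ := hTprop p hp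
  obtain ⟨hT1, hT2, _, _⟩ := hTprop q hq
  have := CardB.Phi_inj hS1 hS2 hT1 hT2 hpq
  exact Prod.ext this.1 this.2
end
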